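/- arXiv:1102.4226 — 8 statements merged into one kernel-verified Lean document; each statement's English description precedes it below -/
import Mathlib

section
/- Define a partial order on the set S of all permutations of all finite sizes by σ ≤ τ if σ occurs as a classical pattern in τ. The incidence-algebra element P defined by P(σ, τ) = (number of occurrences of σ in τ) is invertible, and its inverse is given by P⁻¹(σ, τ) = (-1)^{|τ|-|σ|} P(σ, τ). -/
/-!
An occurrence of some `ρ ∈ S_m` in `τ` is the same thing as an `m`-set `T` of positions of `τ`
(the pattern of `τ` on `T` determines `ρ`), and composing with it identifies the occurrences of
`σ` in `ρ` with the occurrences of `σ` in `τ` whose positions lie in `T`. Double counting gives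
`∑_{ρ ∈ S_m} P(σ,ρ) P(ρ,τ) = P(σ,τ) · C(|τ| - |σ|, m - |σ|)`, so both convolutions are
`P(σ,τ)` times an alternating sum of binomial coefficients, which vanishes unless `|σ| = |τ|`;
for equal sizes the only increasing position map is the identity, so `P(σ,τ) = [σ = τ]`.
-/

open Finset

/-- Number of occurrences of the classical pattern `σ` in `τ`: subsequences of `τ`
order-isomorphic to `σ`. -/
def occ {k n : ℕ} (σ : Equiv.Perm (Fin k)) (τ : Equiv.Perm (Fin n)) : ℕ :=
  (univ.filter fun f : Fin k → Fin n =>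
    (∀ i j : Fin k, i < j → f i < f j) ∧
    (∀ i j : Fin k, σ i < σ j ↔ τ (f i) < τ (f j))).card

/-- The set `S = ∪_{n≥0} S_n` of all permutations of all finite sizes. -/
def Perms := Σ n : ℕ, Equiv.Perm (Fin n)

instance : DecidableEq Perms := by unfold Perms; infer_instance

/-- The incidence algebra element `P(σ, τ) = #occurrences of σ in τ` (σ ≤ τ in the
pattern-containment order iff `P(σ,τ) > 0`). -/
def P (σ τ : Perms) : ℤ := occ σ.2 τ.2

open Equiv Function

theorem Equiv.Perm.eq_of_forall_lt_iff_lt {m : ℕ} {ρ ρ' : Perm (Fin m)}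
    (h : ∀ i j, ρ i < ρ j ↔ ρ' i < ρ' j) : ρ = ρ' := by
  have hmono : StrictMono (ρ' ∘ ρ.symm) := fun a b hab => by
    simpa using (h (ρ.symm a) (ρ.symm b)).mp (by simpa using hab)
  refine Equiv.ext fun i => ?_
  simpa using (congrFun hmono.eq_id (ρ i)).symm

theorem Equiv.Perm.exists_forall_lt_iff_lt {m : ℕ} {α : Type*} [LinearOrder α] {u : Fin m → α}
    (hu : Injective u) : ∃ ρ : Perm (Fin m), ∀ i j, ρ i < ρ j ↔ u i < u j := by
  have hsorted : StrictMono (u ∘ Tuple.sort u) :=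
    (Tuple.monotone_sort u).strictMono_of_injective (hu.comp (Tuple.sort u).injective)
  refine ⟨(Tuple.sort u).symm, fun i j => ?_⟩
  simpa using (hsorted.lt_iff_lt (a := (Tuple.sort u).symm i) (b := (Tuple.sort u).symm j)).symm

namespace PatternContainment

variable {k m n : ℕ}

def occurrences (σ : Perm (Fin k)) (τ : Perm (Fin n)) : Finset (Fin k → Fin n) :=
  univ.filter fun f : Fin k → Fin n =>
    (∀ i j : Fin k, i < j → f i < f j) ∧
    (∀ i j : Fin k, σ i < σ j ↔ τ (f i) < τ (f j))

theorem occ_eq_card_occurrences (σ : Perm (Fin k)) (τ : Perm (Fin n)) :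
    occ σ τ = #(occurrences σ τ) := rfl

theorem mem_occurrences {σ : Perm (Fin k)} {τ : Perm (Fin n)} {f : Fin k → Fin n} :
    f ∈ occurrences σ τ ↔ StrictMono f ∧ ∀ i j, σ i < σ j ↔ τ (f i) < τ (f j) := by
  simp only [occurrences, mem_filter, mem_univ, true_and]
  rfl

theorem comp_mem_occurrences {σ : Perm (Fin k)} {ρ : Perm (Fin m)} {τ : Perm (Fin n)}
    {f : Fin k → Fin m} {g : Fin m → Fin n} (hf : f ∈ occurrences σ ρ)
    (hg : g ∈ occurrences ρ τ) : g ∘ f ∈ occurrences σ τ := by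
  rw [mem_occurrences] at *
  exact ⟨hg.1.comp hf.1, fun i j => (hf.2 i j).trans (hg.2 (f i) (f j))⟩

theorem card_occurrences_eq_card_filter_image_subset {σ : Perm (Fin k)} {ρ : Perm (Fin m)}
    {τ : Perm (Fin n)} {g : Fin m → Fin n} (hg : g ∈ occurrences ρ τ) :
    #(occurrences σ ρ) = #{h ∈ occurrences σ τ | univ.image h ⊆ univ.image g} := by
  obtain ⟨hg_mono, hg_pat⟩ := mem_occurrences.mp hg
  refine card_nbij (g ∘ ·) (fun f hf => ?_) (fun f _ f' _ h => ?_) (fun h hh => ?_)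
  · refine mem_filter.mpr ⟨comp_mem_occurrences hf hg, ?_⟩
    rw [← image_image]
    exact image_subset_image (subset_univ _)
  · exact hg_mono.injective.comp_left h
  · obtain ⟨hh_occ, hh_sub⟩ := mem_filter.mp hh
    obtain ⟨hh_mono, hh_pat⟩ := mem_occurrences.mp hh_occ
    have : ∀ i, ∃ j, g j = h i := fun i => by
      simpa using hh_sub (mem_image_of_mem h (mem_univ i))
    choose f hf using this
    refine ⟨f, mem_occurrences.mpr ⟨fun i j hij => ?_, fun i j => ?_⟩, funext hf⟩
    · exact hg_mono.lt_iff_lt.mp (by simpa [hf] using hh_mono hij)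
    · rw [hh_pat, hg_pat, hf, hf]

theorem eq_of_image_eq {ρ ρ' : Perm (Fin m)} {τ : Perm (Fin n)} {g g' : Fin m → Fin n}
    (hg : g ∈ occurrences ρ τ) (hg' : g' ∈ occurrences ρ' τ)
    (h : univ.image g = univ.image g') : ρ = ρ' ∧ g = g' := by
  rw [mem_occurrences] at hg hg'
  have hrange : Set.range g = Set.range g' := by
    simpa using congrArg (fun s : Finset (Fin n) => (s : Set (Fin n))) h
  have hgg' : g = g' := (hg.1.range_inj hg'.1).mp hrange
  subst hgg'
  exact ⟨Perm.eq_of_forall_lt_iff_lt fun i j => (hg.2 i j).trans (hg'.2 i j).symm, rfl⟩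

theorem exists_mem_occurrences_image_eq (τ : Perm (Fin n)) {T : Finset (Fin n)} (hT : #T = m) :
    ∃ ρ : Perm (Fin m), ∃ g ∈ occurrences ρ τ, univ.image g = T := by
  let g := T.orderEmbOfFin hT
  obtain ⟨ρ, hρ⟩ := Perm.exists_forall_lt_iff_lt (τ.injective.comp g.injective)
  exact ⟨ρ, g, mem_occurrences.mpr ⟨g.strictMono, hρ⟩, image_orderEmbOfFin_univ T hT⟩

theorem sum_sum_occurrences_eq_sum_powersetCard {M : Type*} [AddCommMonoid M]
    (τ : Perm (Fin n)) (F : Finset (Fin n) → M) :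
    ∑ ρ : Perm (Fin m), ∑ g ∈ occurrences ρ τ, F (univ.image g) =
      ∑ T ∈ powersetCard m univ, F T := by
  rw [sum_sigma']
  refine sum_bij (fun x _ => univ.image x.2) (fun x hx => ?_) (fun x hx y hy hxy => ?_)
    (fun T hT => ?_) (fun _ _ => rfl)
  · obtain ⟨-, hx⟩ := mem_sigma.mp hx
    rw [mem_powersetCard, card_image_of_injective _ (mem_occurrences.mp hx).1.injective]
    simp
  · obtain ⟨hρ, hg⟩ := eq_of_image_eq (mem_sigma.mp hx).2 (mem_sigma.mp hy).2 hxy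
    obtain ⟨ρ, g⟩ := x
    obtain ⟨ρ', g'⟩ := y
    dsimp only at hρ hg
    subst hρ hg
    rfl
  · obtain ⟨ρ, g, hg, hgT⟩ :=
      exists_mem_occurrences_image_eq τ (mem_powersetCard.mp hT).2
    exact ⟨⟨ρ, g⟩, mem_sigma.mpr ⟨mem_univ ρ, hg⟩, hgT⟩

theorem sum_occ_mul_occ (hkm : k ≤ m) (σ : Perm (Fin k)) (τ : Perm (Fin n)) :
    ∑ ρ : Perm (Fin m), occ σ ρ * occ ρ τ = occ σ τ * (n - k).choose (m - k) := by
  simp only [occ_eq_card_occurrences]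
  calc ∑ ρ : Perm (Fin m), #(occurrences σ ρ) * #(occurrences ρ τ)
      = ∑ ρ : Perm (Fin m), ∑ g ∈ occurrences ρ τ,
          #{h ∈ occurrences σ τ | univ.image h ⊆ univ.image g} := by
        refine sum_congr rfl fun ρ _ => ?_
        rw [mul_comm, sum_const_nat fun g hg =>
          (card_occurrences_eq_card_filter_image_subset hg).symm]
    _ = ∑ T ∈ powersetCard m univ, #{h ∈ occurrences σ τ | univ.image h ⊆ T} :=
        sum_sum_occurrences_eq_sum_powersetCard τ fun T =>
          #{h ∈ occurrences σ τ | univ.image h ⊆ T}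
    _ = ∑ h ∈ occurrences σ τ, #{T ∈ powersetCard m univ | univ.image h ⊆ T} := by
        simp only [card_eq_sum_ones, sum_filter]
        exact sum_comm
    _ = #(occurrences σ τ) * (n - k).choose (m - k) := by
        refine sum_const_nat fun h hh => ?_
        have hcard : #(univ.image h) = k := by
          rw [card_image_of_injective _ (mem_occurrences.mp hh).1.injective]
          simp
        rw [card_filter_powersetCard_subset _ _ _ (subset_univ _) (hcard.symm ▸ hkm), hcard]
        simp

theorem occ_of_same_size (σ τ : Perm (Fin n)) : occ σ τ = if σ = τ then 1 else 0 := by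
  have hid : ∀ f ∈ occurrences σ τ, f = id := fun f hf => (mem_occurrences.mp hf).1.eq_id
  rw [occ_eq_card_occurrences]
  split_ifs with h
  · subst h
    refine card_eq_one.mpr ⟨id, eq_singleton_iff_unique_mem.mpr ⟨?_, hid⟩⟩
    exact mem_occurrences.mpr ⟨strictMono_id, fun _ _ => Iff.rfl⟩
  · refine card_eq_zero.mpr (eq_empty_of_forall_notMem fun f hf => h ?_)
    obtain ⟨-, hpat⟩ := mem_occurrences.mp hf
    rw [hid f hf] at hpat
    exact Perm.eq_of_forall_lt_iff_lt hpat

theorem P_mul_ite_fst_eq (σ τ : Perms) :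
    P σ τ * (if σ.1 = τ.1 then 1 else 0) = if σ = τ then 1 else 0 := by
  obtain ⟨k, s⟩ := σ
  obtain ⟨n, t⟩ := τ
  by_cases hkn : k = n
  · subst hkn
    simp [P, occ_of_same_size, Perms]
  · simp [hkn, Perms]

theorem sum_Icc_sum_mul_P_mul_P (w : ℕ → ℤ) (σ τ : Perms) :
    ∑ m ∈ Icc σ.1 τ.1, ∑ ρ : Perm (Fin m), w m * (P σ ⟨m, ρ⟩ * P ⟨m, ρ⟩ τ) =
      P σ τ * ∑ m ∈ Icc σ.1 τ.1, w m * (τ.1 - σ.1).choose (m - σ.1) := by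
  rw [mul_sum]
  refine sum_congr rfl fun m hm => ?_
  rw [← mul_sum, mul_left_comm (P σ τ)]
  congr 1
  simp only [P]
  exact_mod_cast sum_occ_mul_occ (mem_Icc.mp hm).1 σ.2 τ.2

end PatternContainment

theorem Int.sum_Icc_neg_one_pow_mul_choose (k n : ℕ) :
    ∑ m ∈ Icc k n, (-1 : ℤ) ^ (m - k) * (n - k).choose (m - k) = if k = n then 1 else 0 := by
  rcases lt_or_ge n k with hnk | hkn
  · simp [Icc_eq_empty_of_lt hnk, hnk.ne']
  rw [← Ico_add_one_right_eq_Icc, sum_Ico_eq_sum_range, Nat.sub_add_comm hkn]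
  simp only [Nat.add_sub_cancel_left]
  rw [Int.alternating_sum_range_choose]
  split_ifs <;> omega

theorem Int.sum_Icc_neg_one_pow_sub_mul_choose (k n : ℕ) :
    ∑ m ∈ Icc k n, (-1 : ℤ) ^ (n - m) * (n - k).choose (m - k) = if k = n then 1 else 0 := by
  have hsign : ∀ m ∈ Icc k n, (-1 : ℤ) ^ (n - m) = (-1) ^ (n - k) * (-1) ^ (m - k) := by
    intro m hm
    obtain ⟨hkm, hmn⟩ := mem_Icc.mp hm
    rw [← pow_add, show n - k + (m - k) = n - m + 2 * (m - k) by omega, pow_add, pow_mul]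
    simp
  rw [sum_congr rfl fun m hm => by rw [hsign m hm, mul_assoc], ← mul_sum,
    Int.sum_Icc_neg_one_pow_mul_choose]
  split_ifs with h <;> simp [h]

open PatternContainment

/-- The convolution `∑_{σ ≤ ρ ≤ τ}` is written as a sum over all permutations `ρ` of each size
in `[|σ|, |τ|]`; terms with `ρ` not in the interval `[σ, τ]` vanish since then `P(σ,ρ) = 0` or
`P(ρ,τ) = 0`. -/
theorem P_inverse (σ τ : Perms) :
    (∑ m ∈ Icc σ.1 τ.1, ∑ ρ : Equiv.Perm (Fin m),
        P σ ⟨m, ρ⟩ * ((-1 : ℤ) ^ (τ.1 - m) * P ⟨m, ρ⟩ τ)) =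
      (if σ = τ then 1 else 0) ∧
    (∑ m ∈ Icc σ.1 τ.1, ∑ ρ : Equiv.Perm (Fin m),
        ((-1 : ℤ) ^ (m - σ.1) * P σ ⟨m, ρ⟩) * P ⟨m, ρ⟩ τ) =
      (if σ = τ then 1 else 0) := by
  constructor
  · refine (sum_congr rfl fun m _ => sum_congr rfl fun ρ _ => mul_left_comm _ _ _).trans ?_
    rw [sum_Icc_sum_mul_P_mul_P, Int.sum_Icc_neg_one_pow_sub_mul_choose, P_mul_ite_fst_eq]
  · refine (sum_congr rfl fun m _ => sum_congr rfl fun ρ _ => mul_assoc _ _ _).trans ?_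
    rw [sum_Icc_sum_mul_P_mul_P, Int.sum_Icc_neg_one_pow_mul_choose, P_mul_ite_fst_eq]
end

section
/- Möbius-type inversion for pattern counts: for functions f, g : S → ℂ on the set of all permutations, f(π) = ∑_{σ ≤ π} g(σ) · occ(σ, π) for all π if and only if g(π) = ∑_{σ ≤ π} (-1)^{|π|-|σ|} f(σ) · occ(σ, π) for all π, where occ(σ, π) is the number of occurrences of the classical pattern σ in π. -/
open Finset

/-!
An occurrence of a pattern in `τ : Perm (Fin n)` is a set `s` of positions, and the pattern it
carries is `τ.patternAt s`, the standardization of the entries of `τ` at `s`. The patterns of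
`τ.patternAt s` are exactly the `τ.patternAt u` with `u ⊆ s`. Hence, for a fixed `τ`, the two
identities say `F s = ∑ u ⊆ s, G u` and `G s = ∑ u ⊆ s, (-1) ^ (#s - #u) * F u` for
`F s = f (τ.patternAt s)` and `G s = g (τ.patternAt s)`, and these are equivalent by Möbius
inversion on the Boolean lattice of subsets of positions.
-/

section BooleanMoebius

variable {α R : Type*} [DecidableEq α] [CommRing R]

lemma neg_one_pow_mul_self (n : ℕ) : (-1 : R) ^ n * (-1) ^ n = 1 := by
  rw [← mul_pow, neg_mul_neg, one_mul, one_pow]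

lemma neg_one_pow_sub_of_le {a b : ℕ} (h : b ≤ a) : (-1 : R) ^ (a - b) = (-1) ^ a * (-1) ^ b := by
  obtain ⟨c, rfl⟩ := Nat.exists_eq_add_of_le h
  rw [Nat.add_sub_cancel_left, pow_add, mul_right_comm, neg_one_pow_mul_self, one_mul]

theorem Finset.sum_Icc_neg_one_pow_card {s t : Finset α} (h : s ⊆ t) :
    ∑ u ∈ Icc s t, (-1 : R) ^ #u = if s = t then (-1) ^ #s else 0 := by
  have hdisj : ∀ v ∈ (t \ s).powerset, Disjoint s v := fun v hv =>
    (disjoint_of_subset_left (mem_powerset.mp hv) sdiff_disjoint).symm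
  have hinj : Set.InjOn (s ∪ ·) (t \ s).powerset := fun v hv w hw hvw => by
    rw [← union_sdiff_cancel_left (hdisj v hv), ← union_sdiff_cancel_left (hdisj w hw)]
    exact congrArg (· \ s) hvw
  have halt : ∑ v ∈ (t \ s).powerset, (-1 : R) ^ #v = if t \ s = ∅ then 1 else 0 := by
    exact_mod_cast congrArg (Int.cast : ℤ → R) (sum_powerset_neg_one_pow_card (x := t \ s))
  rw [Icc_eq_image_powerset h, sum_image hinj,
    sum_congr rfl fun v hv => by rw [card_union_of_disjoint (hdisj v hv), pow_add],
    ← mul_sum, halt]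
  have hts : t \ s = ∅ ↔ s = t := by
    rw [sdiff_eq_empty_iff_subset]
    exact ⟨subset_antisymm h, fun hst => hst.ge⟩
  simp only [hts, mul_ite, mul_one, mul_zero]

theorem Finset.sum_powerset_neg_one_pow_card_mul_sum_powerset (φ : Finset α → R) (s : Finset α) :
    ∑ t ∈ s.powerset, (-1 : R) ^ #t * ∑ u ∈ t.powerset, φ u = (-1) ^ #s * φ s := by
  calc ∑ t ∈ s.powerset, (-1 : R) ^ #t * ∑ u ∈ t.powerset, φ u
      = ∑ u ∈ s.powerset, (∑ t ∈ Icc u s, (-1 : R) ^ #t) * φ u := by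
        simp_rw [mul_sum, sum_mul]
        refine sum_comm' fun t u => ?_
        simp only [mem_powerset, mem_Icc]
        exact ⟨fun ⟨hts, hut⟩ => ⟨⟨hut, hts⟩, hut.trans hts⟩, fun ⟨⟨hut, hts⟩, _⟩ => ⟨hts, hut⟩⟩
    _ = ∑ u ∈ s.powerset, if u = s then (-1 : R) ^ #s * φ s else 0 := by
        refine sum_congr rfl fun u hu => ?_
        rw [sum_Icc_neg_one_pow_card (mem_powerset.mp hu)]
        split_ifs with hus
        · rw [hus]
        · rw [zero_mul]
    _ = (-1) ^ #s * φ s := by rw [sum_ite_eq' _ _, if_pos (mem_powerset_self s)]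

theorem Finset.moebius_inversion_powerset (F G : Finset α → R) :
    (∀ s, F s = ∑ t ∈ s.powerset, G t) ↔
      ∀ s, G s = ∑ t ∈ s.powerset, (-1 : R) ^ (#s - #t) * F t := by
  have hsign : ∀ s : Finset α, ∀ t ∈ s.powerset, (-1 : R) ^ (#s - #t) = (-1) ^ #s * (-1) ^ #t :=
    fun s t ht => neg_one_pow_sub_of_le (card_le_card (mem_powerset.mp ht))
  constructor
  · intro hF s
    rw [sum_congr rfl fun t ht => by rw [hsign s t ht, hF t, mul_assoc], ← mul_sum,
      sum_powerset_neg_one_pow_card_mul_sum_powerset, ← mul_assoc, neg_one_pow_mul_self, one_mul]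
  · intro hG s
    have hG' : ∀ t, G t = (-1) ^ #t * ∑ u ∈ t.powerset, (-1) ^ #u * F u := fun t => by
      rw [hG t, mul_sum]
      exact sum_congr rfl fun u hu => by rw [hsign t u hu, mul_assoc]
    rw [sum_congr rfl fun t _ => hG' t, sum_powerset_neg_one_pow_card_mul_sum_powerset,
      ← mul_assoc, neg_one_pow_mul_self, one_mul]

end BooleanMoebius

section Standardize

variable {α : Type*} [LinearOrder α] {k m : ℕ}

/-- `standardize v i` is the rank of `v i` among the values of `v`. -/
def Tuple.standardize (v : Fin k → α) : Equiv.Perm (Fin k) := (Tuple.sort v).symm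

open Tuple

lemma Tuple.standardize_lt_standardize_iff {v : Fin k → α} (hv : Function.Injective v)
    (i j : Fin k) : standardize v i < standardize v j ↔ v i < v j := by
  have hsorted : StrictMono (v ∘ sort v) :=
    (monotone_sort v).strictMono_of_injective (hv.comp (sort v).injective)
  conv_rhs => rw [← (sort v).apply_symm_apply i, ← (sort v).apply_symm_apply j]
  exact hsorted.lt_iff_lt.symm

lemma Tuple.standardize_eq_iff {v : Fin k → α} (hv : Function.Injective v)
    {σ : Equiv.Perm (Fin k)} : standardize v = σ ↔ ∀ i j, σ i < σ j ↔ v i < v j := by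
  refine ⟨fun h => h ▸ standardize_lt_standardize_iff hv, fun h => ?_⟩
  have hsort : σ.symm = sort v := by
    refine eq_sort_iff.mpr ⟨monotone_iff_forall_lt.mpr fun a b hab => ?_,
      fun a b hab heq => absurd (hv heq) (σ.symm.injective.ne hab.ne)⟩
    refine le_of_lt ((h _ _).mp ?_)
    simpa using hab
  rw [standardize, ← hsort, Equiv.symm_symm]

@[simp]
lemma Tuple.standardize_perm (τ : Equiv.Perm (Fin k)) : standardize τ = τ := by
  simp [standardize, sort_perm, Equiv.Perm.inv_def]

lemma Tuple.standardize_standardize_comp {v : Fin k → α} (hv : Function.Injective v)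
    {g : Fin m → Fin k} (hg : Function.Injective g) :
    standardize (standardize v ∘ g) = standardize (v ∘ g) := by
  rw [standardize_eq_iff ((standardize v).injective.comp hg)]
  intro i j
  rw [standardize_lt_standardize_iff (hv.comp hg)]
  exact (standardize_lt_standardize_iff hv (g i) (g j)).symm

end Standardize

theorem Finset.sum_strictMono_image_univ {α M : Type*} [Fintype α] [LinearOrder α]
    [AddCommMonoid M] (φ : Finset α → M) (k : ℕ) :
    ∑ f ∈ {f : Fin k → α | StrictMono f}, φ (univ.image f) = ∑ s ∈ powersetCard k univ, φ s := by
  refine sum_bij' (fun f _ => univ.image f)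
    (fun s hs => s.orderEmbOfFin (mem_powersetCard.mp hs).2) (fun f hf => ?_)
    (fun s _ => by simpa using (s.orderEmbOfFin _).strictMono) (fun f hf => ?_)
    (fun s _ => image_orderEmbOfFin_univ s _) (fun _ _ => rfl)
  · have hf : StrictMono f := by simpa using hf
    simp [mem_powersetCard, card_image_of_injective _ hf.injective]
  · have hf : StrictMono f := by simpa using hf
    exact (orderEmbOfFin_unique _ (fun i => mem_image_of_mem f (mem_univ i)) hf).symm

namespace Equiv.Perm

open Tuple

variable {n k : ℕ}

def patternAt (τ : Perm (Fin n)) (s : Finset (Fin n)) : Perms :=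
  ⟨#s, standardize (τ ∘ s.orderEmbOfFin rfl)⟩

lemma patternAt_eq (τ : Perm (Fin n)) {s : Finset (Fin n)} (h : #s = k) :
    τ.patternAt s = ⟨k, standardize (τ ∘ s.orderEmbOfFin h)⟩ := by
  subst h
  rfl

lemma patternAt_image (τ : Perm (Fin n)) {f : Fin k → Fin n} (hf : StrictMono f) :
    τ.patternAt (univ.image f) = ⟨k, standardize (τ ∘ f)⟩ := by
  have hcard : #(univ.image f) = k := by
    rw [card_image_of_injective _ hf.injective, card_univ, Fintype.card_fin]
  rw [patternAt_eq τ hcard,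
    ← orderEmbOfFin_unique hcard (fun i => mem_image_of_mem f (mem_univ i)) hf]

lemma patternAt_univ (τ : Perm (Fin n)) : τ.patternAt univ = ⟨n, τ⟩ := by
  simpa using τ.patternAt_image strictMono_id

lemma patternAt_patternAt (τ : Perm (Fin n)) (s : Finset (Fin n)) (t : Finset (Fin #s)) :
    (τ.patternAt s).2.patternAt t = τ.patternAt (t.image (s.orderEmbOfFin rfl)) := by
  set e := s.orderEmbOfFin rfl
  have he : t.image e = univ.image (e ∘ t.orderEmbOfFin rfl) := by
    rw [← image_image, image_orderEmbOfFin_univ]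
  rw [he, patternAt_image τ (e.strictMono.comp (t.orderEmbOfFin rfl).strictMono),
    ← Function.comp_assoc,
    ← standardize_standardize_comp (τ.injective.comp e.injective) (t.orderEmbOfFin rfl).injective]
  rfl

lemma sum_powerset_patternAt_patternAt {M : Type*} [AddCommMonoid M] (φ : Perms → M)
    (τ : Perm (Fin n)) (s : Finset (Fin n)) :
    ∑ t ∈ (univ : Finset (Fin #s)).powerset, φ ((τ.patternAt s).2.patternAt t) =
      ∑ u ∈ s.powerset, φ (τ.patternAt u) := by
  simp_rw [patternAt_patternAt]
  conv_rhs => rw [← image_orderEmbOfFin_univ s rfl]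
  rw [powerset_image,
    sum_image (image_injOn_powerset_of_injOn (s.orderEmbOfFin rfl).injective.injOn)]

end Equiv.Perm

section Occurrences

open Equiv Tuple

variable {n k : ℕ}

lemma occ_eq_card (σ : Perm (Fin k)) (τ : Perm (Fin n)) :
    occ σ τ = #{f : Fin k → Fin n | StrictMono f ∧ standardize (τ ∘ f) = σ} := by
  unfold occ
  congr 1
  ext f
  simp only [mem_filter, mem_univ, true_and]
  constructor
  · rintro ⟨hf, hσ⟩
    have hf : StrictMono f := fun i j hij => hf i j hij
    exact ⟨hf, (standardize_eq_iff (τ.injective.comp hf.injective)).mpr hσ⟩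
  · rintro ⟨hf, hσ⟩
    exact ⟨fun i j hij => hf hij, (standardize_eq_iff (τ.injective.comp hf.injective)).mp hσ⟩

lemma sum_mul_occ_eq_sum_strictMono {R : Type*} [Semiring R] (F : Perm (Fin k) → R)
    (τ : Perm (Fin n)) :
    ∑ σ, F σ * occ σ τ = ∑ f ∈ {f : Fin k → Fin n | StrictMono f}, F (standardize (τ ∘ f)) := by
  rw [← sum_fiberwise' _ (fun f => standardize (τ ∘ f))]
  refine sum_congr rfl fun σ _ => ?_
  rw [sum_const, nsmul_eq_mul', occ_eq_card, filter_filter]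

lemma sum_mul_occ {R : Type*} [Semiring R] (F : Perms → R) (τ : Perm (Fin n)) (k : ℕ) :
    ∑ σ : Perm (Fin k), F ⟨k, σ⟩ * occ σ τ = ∑ s ∈ powersetCard k univ, F (τ.patternAt s) := by
  refine (sum_mul_occ_eq_sum_strictMono (fun σ => F ⟨k, σ⟩) τ).trans ?_
  rw [← sum_strictMono_image_univ (fun s => F (τ.patternAt s))]
  exact sum_congr rfl fun f hf => by rw [τ.patternAt_image (mem_filter.mp hf).2]

lemma sum_sum_mul_occ {R : Type*} [Semiring R] (F : Perms → R) (τ : Perm (Fin n)) :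
    ∑ m ∈ range (n + 1), ∑ σ : Perm (Fin m), F ⟨m, σ⟩ * occ σ τ =
      ∑ s ∈ univ.powerset, F (τ.patternAt s) := by
  have hcard : ∀ s ∈ (univ : Finset (Fin n)).powerset, #s ∈ range (n + 1) := fun s _ =>
    mem_range.mpr (Nat.lt_succ_of_le (by simpa using card_le_univ s))
  rw [← sum_fiberwise_of_maps_to hcard]
  exact sum_congr rfl fun m _ => (sum_mul_occ F τ m).trans (by rw [powersetCard_eq_filter])

end Occurrences

open Equiv

theorem forall_eq_sum_patternAt_iff {R : Type*} [CommRing R] (f g : Perms → R) :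
    (∀ π : Perms, f π = ∑ s ∈ univ.powerset, g (π.2.patternAt s)) ↔
      ∀ π : Perms, g π = ∑ s ∈ univ.powerset, (-1 : R) ^ (π.1 - #s) * f (π.2.patternAt s) := by
  constructor
  · rintro h ⟨n, τ⟩
    have hF : ∀ s, f (τ.patternAt s) = ∑ u ∈ s.powerset, g (τ.patternAt u) := fun s =>
      (h _).trans (τ.sum_powerset_patternAt_patternAt g s)
    have := (moebius_inversion_powerset _ _).mp hF univ
    rwa [Perm.patternAt_univ, card_univ, Fintype.card_fin] at this
  · rintro h ⟨n, τ⟩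
    have hG : ∀ s, g (τ.patternAt s) =
        ∑ u ∈ s.powerset, (-1 : R) ^ (#s - #u) * f (τ.patternAt u) := fun s =>
      (h _).trans (τ.sum_powerset_patternAt_patternAt (fun σ => (-1) ^ (#s - σ.1) * f σ) s)
    have := (moebius_inversion_powerset _ _).mpr hG univ
    rwa [Perm.patternAt_univ] at this

/-- Möbius-type inversion for pattern counts: for `f, g : S → ℂ`,
`f(π) = ∑_{σ ≤ π} g(σ)·occ(σ,π)` for all `π` iff
`g(π) = ∑_{σ ≤ π} (-1)^{|π|-|σ|} f(σ)·occ(σ,π)` for all `π`.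
Only patterns `σ` with `|σ| ≤ |π|` contribute, so the sums range over all
permutations of each size `m ≤ |π|` (terms with `σ ≰ π` have `occ(σ,π) = 0`). -/
theorem pattern_inversion (f g : Perms → ℂ) :
    (∀ π : Perms, f π =
        ∑ m ∈ range (π.1 + 1), ∑ σ : Equiv.Perm (Fin m),
          g ⟨m, σ⟩ * (occ σ π.2 : ℂ)) ↔
    (∀ π : Perms, g π =
        ∑ m ∈ range (π.1 + 1), ∑ σ : Equiv.Perm (Fin m),
          (-1 : ℂ) ^ (π.1 - m) * f ⟨m, σ⟩ * (occ σ π.2 : ℂ)) := by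
  have hsum_g : ∀ π : Perms, ∑ m ∈ range (π.1 + 1), ∑ σ : Perm (Fin m), g ⟨m, σ⟩ * (occ σ π.2 : ℂ) =
      ∑ s ∈ univ.powerset, g (π.2.patternAt s) := fun π => sum_sum_mul_occ g π.2
  have hsum_f : ∀ π : Perms, ∑ m ∈ range (π.1 + 1), ∑ σ : Perm (Fin m),
      (-1 : ℂ) ^ (π.1 - m) * f ⟨m, σ⟩ * (occ σ π.2 : ℂ) =
        ∑ s ∈ univ.powerset, (-1 : ℂ) ^ (π.1 - #s) * f (π.2.patternAt s) := fun π =>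
    sum_sum_mul_occ (fun σ => (-1) ^ (π.1 - σ.1) * f σ) π.2
  simp only [hsum_g, hsum_f]
  exact forall_eq_sum_patternAt_iff f g
end

section
/- Reciprocity Theorem for mesh patterns: let p = (π, R) be a mesh pattern with π ∈ S_k and R ⊆ [0,k]×[0,k], and let p* = (π, R^c) where R^c = ([0,k]×[0,k]) \ R. Then for every permutation τ, p*(τ) = ∑_{σ ≤ τ} (-1)^{|π|-|σ|} · p(σ) · occ(σ, τ), where the sum is over classical patterns σ occurring in τ. Equivalently, p(τ) = ∑_{σ} (-1)^{|σ|-|π|} p*(σ) occ(σ, τ). -/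
open Finset

/-- The boundary values `α(0) = 0`, `α(m) = g(m-1)+1` (1-indexed) for `1 ≤ m ≤ k`, and
`α(k+1) = n+1`, associated to a selection `g : Fin k → Fin n` of columns (or rows). -/
def bd {k n : ℕ} (g : Fin k → Fin n) (m : ℕ) : ℕ :=
  if h : 1 ≤ m ∧ m ≤ k then (g ⟨m - 1, by omega⟩ : ℕ) + 1
  else if m = 0 then 0 else n + 1

/-- Number of occurrences of the mesh pattern `(σ, R)` in `τ`: occurrences of the
classical pattern `σ` (given by the column selection `f`) such that for every
`(i,j) ∈ R` the open region between columns `α(i), α(i+1)` and rows `β(j), β(j+1)`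
of the occurrence contains no point of the plot of `τ` (1-indexed coordinates,
with boundary conventions `0` and `n+1`). -/
def meshOcc {k n : ℕ} (σ : Equiv.Perm (Fin k)) (R : Finset (Fin (k + 1) × Fin (k + 1)))
    (τ : Equiv.Perm (Fin n)) : ℕ :=
  (univ.filter fun f : Fin k → Fin n =>
    (∀ i j : Fin k, i < j → f i < f j) ∧
    (∀ i j : Fin k, σ i < σ j ↔ τ (f i) < τ (f j)) ∧
    (∀ r ∈ R, ∀ a : Fin n,
      ¬ (bd f (r.1 : ℕ) < (a : ℕ) + 1 ∧ (a : ℕ) + 1 < bd f ((r.1 : ℕ) + 1) ∧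
         bd (fun i => τ (f (σ.symm i))) (r.2 : ℕ) < (τ a : ℕ) + 1 ∧
         (τ a : ℕ) + 1 < bd (fun i => τ (f (σ.symm i))) ((r.2 : ℕ) + 1)))).card


/-!
An occurrence `f` of `σ` in `τ` cuts the plot of `τ` into a `(k+1) × (k+1)` grid of cells, and
every other point of `τ` lies in exactly one cell (`meshCell`). By inclusion–exclusion,
`[no point of τ lies in a cell of Rᶜ] = ∑_S (-1)^|S|`, the sum running over the sets `S` of
points lying in cells of `Rᶜ`. Such a pair `(f, S)` is the same thing as a chain `(ρ, h, g)`: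
`g` is the occurrence in `τ` of the pattern `ρ` formed by the points of `f` and `S`, and `h` is
the occurrence of `σ` in `ρ` picked out by `f`; the remaining points of `ρ` avoid the cells of
`R` exactly when `h` is an occurrence of the mesh pattern `(σ, R)`. The pair is recovered as
`(g ∘ h, g '' (range h)ᶜ)`, and `|S| = |ρ| - k` gives the sign.
-/

section Boxes

variable {k n : ℕ} {α β γ : Type*} [LinearOrder α]

def numBelow (g : Fin k → α) (a : α) : Fin (k + 1) :=
  ⟨#{i | g i < a}, Nat.lt_succ_of_le ((card_filter_le _ _).trans_eq (card_fin k))⟩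

lemma numBelow_comp_perm (g : Fin k → α) (σ : Equiv.Perm (Fin k)) (a : α) :
    numBelow (g ∘ σ) a = numBelow g a := by
  simp only [numBelow, Fin.mk.injEq]
  exact card_equiv σ fun i => by simp

lemma numBelow_comp_congr [LinearOrder β] [LinearOrder γ] {u : β → α} {v : β → γ}
    (huv : ∀ x y, u x < u y ↔ v x < v y) (h : Fin k → β) (s : β) :
    numBelow (u ∘ h) (u s) = numBelow (v ∘ h) (v s) := by
  simp only [numBelow, Function.comp_apply, huv]

lemma bd_lt_iff {g : Fin k → Fin n} (hg : Monotone g) {c : ℕ} (hc : c ≤ k) (a : Fin n) :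
    bd g c < a + 1 ↔ c ≤ #{i | g i < a} := by
  rcases Nat.eq_zero_or_pos c with rfl | hc0
  · simp [bd]
  · rw [bd, dif_pos ⟨hc0, hc⟩, Nat.add_lt_add_iff_right, ← Fin.lt_def,
      ← Tuple.lt_card_lt_iff_apply_lt_of_monotone hg]
    simp only [Fin.lt_def]
    omega

lemma lt_bd_iff {g : Fin k → Fin n} (hg : Monotone g) {c : ℕ} (hc : c ≤ k) (a : Fin n) :
    a + 1 < bd g (c + 1) ↔ #{i | g i ≤ a} ≤ c := by
  rcases hc.lt_or_eq with hc | rfl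
  · rw [bd, dif_pos ⟨by omega, by omega⟩, Nat.add_lt_add_iff_right, ← Fin.lt_def, ← not_le,
      ← Tuple.lt_card_le_iff_apply_le_of_monotone hg, not_lt]
    rfl
  · simp only [bd, show ¬(1 ≤ c + 1 ∧ c + 1 ≤ c) by omega, dite_false,
      if_neg (by omega : c + 1 ≠ 0)]
    exact ⟨fun _ => (card_filter_le _ _).trans_eq (card_fin c), fun _ => by omega⟩

lemma card_filter_le_le_card_filter_lt_iff (g : Fin k → α) (a : α) :
    #{i | g i ≤ a} ≤ #{i | g i < a} ↔ ∀ i, g i ≠ a := by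
  have hsub : filter (fun i => g i < a) univ ⊆ filter (fun i => g i ≤ a) univ :=
    monotone_filter_right _ fun _ _ => le_of_lt
  constructor
  · intro hle i hi
    have hmem : i ∈ filter (fun i => g i ≤ a) univ := by simp [hi]
    rw [← eq_of_subset_of_card_le hsub hle] at hmem
    simp [hi] at hmem
  · intro hne
    exact card_le_card (monotone_filter_right _ fun i _ h => lt_of_le_of_ne h (hne i))

lemma bd_region_iff {g : Fin k → Fin n} (hg : Monotone g) (c : Fin (k + 1)) (a : Fin n) :
    (bd g c < a + 1 ∧ a + 1 < bd g (c + 1)) ↔ (∀ i, g i ≠ a) ∧ numBelow g a = c := by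
  rw [bd_lt_iff hg (Fin.is_le c), lt_bd_iff hg (Fin.is_le c),
    ← card_filter_le_le_card_filter_lt_iff, Fin.ext_iff]
  simp only [numBelow]
  have : #{i | g i < a} ≤ #{i | g i ≤ a} :=
    card_le_card (monotone_filter_right _ fun _ _ => le_of_lt)
  omega

end Boxes

section Occurrences

variable {k m n : ℕ}

def occurrences (σ : Equiv.Perm (Fin k)) (τ : Equiv.Perm (Fin n)) : Finset (Fin k → Fin n) :=
  {f | (∀ i j : Fin k, i < j → f i < f j) ∧
    (∀ i j : Fin k, σ i < σ j ↔ τ (f i) < τ (f j))}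

lemma card_occurrences (σ : Equiv.Perm (Fin k)) (τ : Equiv.Perm (Fin n)) :
    #(occurrences σ τ) = occ σ τ :=
  rfl

lemma mem_occurrences {σ : Equiv.Perm (Fin k)} {τ : Equiv.Perm (Fin n)} {f : Fin k → Fin n} :
    f ∈ occurrences σ τ ↔ StrictMono f ∧ ∀ i j, σ i < σ j ↔ τ (f i) < τ (f j) := by
  simp [occurrences, StrictMono]

lemma comp_mem_occurrences_iff {σ : Equiv.Perm (Fin k)} {ρ : Equiv.Perm (Fin m)}
    {τ : Equiv.Perm (Fin n)} {g : Fin m → Fin n} (hg : g ∈ occurrences ρ τ)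
    (h : Fin k → Fin m) :
    g ∘ h ∈ occurrences σ τ ↔ h ∈ occurrences σ ρ := by
  obtain ⟨hg_mono, hg_pat⟩ := mem_occurrences.mp hg
  simp only [mem_occurrences, Function.comp_apply, ← hg_pat]
  refine and_congr_left fun _ => ⟨fun hgh i j hij => ?_, hg_mono.comp⟩
  exact hg_mono.lt_iff_lt.mp (hgh hij)

def meshCell (τ : Equiv.Perm (Fin n)) (f : Fin k → Fin n) (a : Fin n) :
    Fin (k + 1) × Fin (k + 1) :=
  (numBelow f a, numBelow (τ ∘ f) (τ a))

lemma meshCell_comp {ρ : Equiv.Perm (Fin m)} {τ : Equiv.Perm (Fin n)} {g : Fin m → Fin n}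
    (hg : g ∈ occurrences ρ τ) (h : Fin k → Fin m) (s : Fin m) :
    meshCell τ (g ∘ h) (g s) = meshCell ρ h s := by
  obtain ⟨hg_mono, hg_pat⟩ := mem_occurrences.mp hg
  exact Prod.ext (numBelow_comp_congr (v := id) (fun _ _ => hg_mono.lt_iff_lt) h s)
    (numBelow_comp_congr (u := τ ∘ g) (fun x y => (hg_pat x y).symm) h s)

lemma bd_region_iff_meshCell_eq {σ : Equiv.Perm (Fin k)} {τ : Equiv.Perm (Fin n)}
    {f : Fin k → Fin n} (hf : f ∈ occurrences σ τ) (r : Fin (k + 1) × Fin (k + 1))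
    (a : Fin n) :
    (bd f r.1 < a + 1 ∧ a + 1 < bd f (r.1 + 1) ∧
      bd (fun i => τ (f (σ.symm i))) r.2 < τ a + 1 ∧
      τ a + 1 < bd (fun i => τ (f (σ.symm i))) (r.2 + 1)) ↔
    (∀ i, f i ≠ a) ∧ meshCell τ f a = r := by
  obtain ⟨hf_mono, hf_pat⟩ := mem_occurrences.mp hf
  have hrow : StrictMono fun i => τ (f (σ.symm i)) := fun i j hij =>
    (hf_pat _ _).mp (by simpa using hij)
  have hrow_numBelow : numBelow (fun i => τ (f (σ.symm i))) (τ a) = numBelow (τ ∘ f) (τ a) :=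
    numBelow_comp_perm (τ ∘ f) σ.symm (τ a)
  rw [← and_assoc, bd_region_iff hf_mono.monotone, bd_region_iff hrow.monotone, hrow_numBelow,
    meshCell, Prod.ext_iff]
  constructor
  · rintro ⟨⟨hne, h1⟩, -, h2⟩
    exact ⟨hne, h1, h2⟩
  · rintro ⟨hne, h1, h2⟩
    exact ⟨⟨hne, h1⟩, fun i hi => hne _ (τ.injective hi), h2⟩

def shadedPoints (τ : Equiv.Perm (Fin n)) (f : Fin k → Fin n)
    (R : Finset (Fin (k + 1) × Fin (k + 1))) : Finset (Fin n) :=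
  {a | (∀ i, f i ≠ a) ∧ meshCell τ f a ∈ R}

lemma disjoint_shadedPoints_image (τ : Equiv.Perm (Fin n)) (f : Fin k → Fin n)
    (R : Finset (Fin (k + 1) × Fin (k + 1))) : Disjoint (shadedPoints τ f R) (univ.image f) := by
  simp +contextual [disjoint_left, shadedPoints]

def meshOccurrences (σ : Equiv.Perm (Fin k)) (R : Finset (Fin (k + 1) × Fin (k + 1)))
    (τ : Equiv.Perm (Fin n)) : Finset (Fin k → Fin n) :=
  {f ∈ occurrences σ τ | shadedPoints τ f R = ∅}

lemma card_meshOccurrences (σ : Equiv.Perm (Fin k)) (R : Finset (Fin (k + 1) × Fin (k + 1)))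
    (τ : Equiv.Perm (Fin n)) : #(meshOccurrences σ R τ) = meshOcc σ R τ := by
  rw [meshOcc, meshOccurrences, occurrences, filter_filter]
  congr 1
  refine filter_congr fun f _ => ?_
  rw [and_assoc]
  refine and_congr_right fun hmono => and_congr_right fun hpat => ?_
  have hf : f ∈ occurrences σ τ := mem_filter.mpr ⟨mem_univ f, hmono, hpat⟩
  simp only [bd_region_iff_meshCell_eq hf, eq_empty_iff_forall_notMem, shadedPoints, mem_filter,
    mem_univ, true_and]
  grind

end Occurrences

section Patterns

variable {m : ℕ}

lemma Equiv.Perm.eq_of_lt_iff_lt {ρ ρ' : Equiv.Perm (Fin m)}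
    (h : ∀ i j, ρ i < ρ j ↔ ρ' i < ρ' j) : ρ = ρ' := by
  have hmono : StrictMono (ρ' ∘ ρ.symm) := fun a b hab => (h _ _).mp (by simpa using hab)
  have hid : ρ' ∘ ρ.symm = id :=
    (hmono.range_inj strictMono_id).mp <| by
      rw [Set.range_id]
      exact (ρ.symm.trans ρ').range_eq_univ
  exact Equiv.ext fun i => by simpa using (congr_fun hid (ρ i)).symm

lemma exists_perm_lt_iff_lt {α : Type*} [LinearOrder α] {v : Fin m → α}
    (hv : Function.Injective v) :
    ∃ ρ : Equiv.Perm (Fin m), ∀ i j, ρ i < ρ j ↔ v i < v j := by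
  have hsorted : StrictMono (v ∘ Tuple.sort v) :=
    (Tuple.monotone_sort v).strictMono_of_injective (hv.comp (Tuple.sort v).injective)
  exact ⟨(Tuple.sort v).symm, fun i j => by rw [← hsorted.lt_iff_lt]; simp⟩

end Patterns

section FinsetImage

variable {k m n : ℕ}

lemma image_eq_image_compl_union_image_comp (g : Fin m → Fin n) (h : Fin k → Fin m) :
    univ.image g = (univ.image h)ᶜ.image g ∪ univ.image (g ∘ h) := by
  rw [← image_image, ← image_union, ← sup_eq_union, compl_sup_eq_top, top_eq_univ]

lemma disjoint_image_compl_image_comp {g : Fin m → Fin n} (hg : Function.Injective g)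
    (h : Fin k → Fin m) : Disjoint ((univ.image h)ᶜ.image g) (univ.image (g ∘ h)) := by
  rw [← image_image, disjoint_image hg]
  exact disjoint_compl_left

lemma card_image_compl_image_add {g : Fin m → Fin n} {h : Fin k → Fin m}
    (hg : Function.Injective g) (hh : Function.Injective h) :
    #((univ.image h)ᶜ.image g) + k = m := by
  have hkm : k ≤ m := by simpa using Fintype.card_le_of_injective h hh
  rw [card_image_of_injective _ hg, card_compl, card_image_of_injective _ hh]
  simp only [card_univ, Fintype.card_fin]
  omega

lemma image_compl_image_eq {f : Fin k → Fin n} {g : Fin m → Fin n} {h : Fin k → Fin m}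
    {S : Finset (Fin n)} (hg : Function.Injective g) (hgh : g ∘ h = f)
    (hrange : univ.image g = S ∪ univ.image f) (hS : Disjoint S (univ.image f)) :
    (univ.image h)ᶜ.image g = S := by
  have hdisj := disjoint_image_compl_image_comp hg h
  rw [hgh] at hdisj
  rw [← union_sdiff_cancel_right hdisj, ← hgh, ← image_eq_image_compl_union_image_comp,
    hrange, hgh, union_sdiff_cancel_right hS]

end FinsetImage

section Reciprocity

variable {k n : ℕ} (σ : Equiv.Perm (Fin k)) (R : Finset (Fin (k + 1) × Fin (k + 1)))
  (τ : Equiv.Perm (Fin n))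

def markedOccurrences : Finset (Σ _ : Fin k → Fin n, Finset (Fin n)) :=
  (occurrences σ τ).sigma fun f => (shadedPoints τ f R).powerset

def chains (m : ℕ) : Finset (Σ _ : Equiv.Perm (Fin m), (Fin k → Fin m) × (Fin m → Fin n)) :=
  univ.sigma fun ρ => meshOccurrences σ R ρ ×ˢ occurrences ρ τ

def flattenChain {m : ℕ} (y : Σ _ : Equiv.Perm (Fin m), (Fin k → Fin m) × (Fin m → Fin n)) :
    Σ _ : Fin k → Fin n, Finset (Fin n) :=
  ⟨y.2.2 ∘ y.2.1, (univ.image y.2.1)ᶜ.image y.2.2⟩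

lemma mem_chains {m : ℕ} {ρ : Equiv.Perm (Fin m)} {h : Fin k → Fin m} {g : Fin m → Fin n} :
    ⟨ρ, h, g⟩ ∈ chains σ R τ m ↔
      (h ∈ occurrences σ ρ ∧ shadedPoints ρ h R = ∅) ∧ g ∈ occurrences ρ τ := by
  simp [chains, meshOccurrences]

lemma mem_markedOccurrences {f : Fin k → Fin n} {S : Finset (Fin n)} :
    ⟨f, S⟩ ∈ markedOccurrences σ R τ ↔
      f ∈ occurrences σ τ ∧ S ⊆ shadedPoints τ f R := by
  simp [markedOccurrences]

lemma flattenChain_mem {m : ℕ}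
    {y : Σ _ : Equiv.Perm (Fin m), (Fin k → Fin m) × (Fin m → Fin n)}
    (hy : y ∈ chains σ R τ m) :
    flattenChain y ∈ {x ∈ markedOccurrences σ Rᶜ τ | #x.2 + k = m} := by
  obtain ⟨ρ, h, g⟩ := y
  obtain ⟨⟨hh, hshaded⟩, hg⟩ := (mem_chains σ R τ).mp hy
  have hg_inj := (mem_occurrences.mp hg).1.injective
  refine mem_filter.mpr ⟨(mem_markedOccurrences σ Rᶜ τ).mpr
    ⟨(comp_mem_occurrences_iff hg h).mpr hh, ?_⟩,
    card_image_compl_image_add hg_inj (mem_occurrences.mp hh).1.injective⟩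
  intro a ha
  obtain ⟨s, hs, rfl⟩ := mem_image.mp ha
  have hs' : ∀ i, h i ≠ s := by simpa using hs
  have hcell : meshCell ρ h s ∉ R := fun hR =>
    notMem_empty s (hshaded ▸ mem_filter.mpr ⟨mem_univ s, hs', hR⟩)
  simp only [shadedPoints, mem_filter, mem_univ, true_and, Function.comp_apply, ne_eq,
    hg_inj.eq_iff, mem_compl, meshCell_comp hg]
  exact ⟨hs', hcell⟩

lemma eq_of_flattenChain_eq {m : ℕ}
    {y y' : Σ _ : Equiv.Perm (Fin m), (Fin k → Fin m) × (Fin m → Fin n)}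
    (hy : y ∈ chains σ R τ m) (hy' : y' ∈ chains σ R τ m)
    (heq : flattenChain y = flattenChain y') :
    y = y' := by
  obtain ⟨ρ, h, g⟩ := y
  obtain ⟨ρ', h', g'⟩ := y'
  obtain ⟨-, hg⟩ := (mem_chains σ R τ).mp hy
  obtain ⟨-, hg'⟩ := (mem_chains σ R τ).mp hy'
  obtain ⟨hg_mono, hg_pat⟩ := mem_occurrences.mp hg
  obtain ⟨hg'_mono, hg'_pat⟩ := mem_occurrences.mp hg'
  simp only [flattenChain, Sigma.mk.injEq, heq_eq_eq] at heq
  obtain ⟨hf, hS⟩ := heq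
  have himage : univ.image g = univ.image g' := by
    rw [image_eq_image_compl_union_image_comp g h, image_eq_image_compl_union_image_comp g' h',
      hS, hf]
  obtain rfl : g = g' := (hg_mono.range_inj hg'_mono).mp <| by
    simpa [Set.ext_iff, Finset.ext_iff] using himage
  obtain rfl : h = h' := funext fun i => hg_mono.injective (congr_fun hf i)
  obtain rfl : ρ = ρ' :=
    Equiv.Perm.eq_of_lt_iff_lt fun i j => (hg_pat i j).trans (hg'_pat i j).symm
  rfl

lemma exists_flattenChain_eq {m : ℕ} {x : Σ _ : Fin k → Fin n, Finset (Fin n)}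
    (hx : x ∈ {x ∈ markedOccurrences σ Rᶜ τ | #x.2 + k = m}) :
    ∃ y ∈ chains σ R τ m, flattenChain y = x := by
  obtain ⟨f, S⟩ := x
  obtain ⟨hx, hcard⟩ := mem_filter.mp hx
  obtain ⟨hf, hS⟩ := (mem_markedOccurrences σ Rᶜ τ).mp hx
  have hS_disj : Disjoint S (univ.image f) := (disjoint_shadedPoints_image τ f Rᶜ).mono_left hS
  have hT : #(S ∪ univ.image f) = m := by
    rw [card_union_of_disjoint hS_disj,
      card_image_of_injective _ (mem_occurrences.mp hf).1.injective, card_univ, Fintype.card_fin,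
      hcard]
  set g := (S ∪ univ.image f).orderEmbOfFin hT
  have hrange : univ.image g = S ∪ univ.image f := image_orderEmbOfFin_univ _ hT
  choose h hh using fun i =>
    mem_image.mp (hrange ▸ mem_union_right S (mem_image_of_mem f (mem_univ i)))
  have hgh : ⇑g ∘ h = f := funext fun i => (hh i).2
  obtain ⟨ρ, hρ⟩ := exists_perm_lt_iff_lt (τ.injective.comp g.injective)
  have hg : ⇑g ∈ occurrences ρ τ := mem_occurrences.mpr ⟨g.strictMono, hρ⟩
  have hS_eq : (univ.image h)ᶜ.image g = S := image_compl_image_eq g.injective hgh hrange hS_disj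
  have hshaded : shadedPoints ρ h R = ∅ := by
    refine eq_empty_iff_forall_notMem.mpr fun s hs => ?_
    obtain ⟨hs, hR⟩ : (∀ i, h i ≠ s) ∧ meshCell ρ h s ∈ R := by
      simpa [shadedPoints] using hs
    have hgs : g s ∈ shadedPoints τ f Rᶜ :=
      hS (hS_eq ▸ mem_image_of_mem g (by simpa using hs))
    rw [← hgh] at hgs
    simp [shadedPoints, meshCell_comp hg, hR] at hgs
  refine ⟨⟨ρ, h, g⟩, (mem_chains σ R τ).mpr ⟨⟨?_, hshaded⟩, hg⟩, ?_⟩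
  · exact (comp_mem_occurrences_iff hg h).mp (hgh ▸ hf)
  · simp only [flattenChain, hgh, hS_eq]

lemma card_chains (m : ℕ) :
    #(chains σ R τ m) = #{x ∈ markedOccurrences σ Rᶜ τ | #x.2 + k = m} :=
  card_nbij flattenChain (fun _ => flattenChain_mem σ R τ)
    (fun _ hy _ hy' => eq_of_flattenChain_eq σ R τ hy hy')
    (fun _ hx => exists_flattenChain_eq σ R τ hx)

lemma card_chains_eq_sum (m : ℕ) :
    #(chains σ R τ m) = ∑ ρ : Equiv.Perm (Fin m), meshOcc σ R ρ * occ ρ τ := by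
  simp [chains, card_sigma, card_product, card_meshOccurrences, card_occurrences]

lemma meshOcc_eq_sum_neg_one_pow :
    (meshOcc σ R τ : ℤ) = ∑ x ∈ markedOccurrences σ R τ, (-1 : ℤ) ^ #x.2 := by
  rw [← card_meshOccurrences, meshOccurrences, card_filter, markedOccurrences, sum_sigma]
  push_cast
  exact sum_congr rfl fun f _ => by rw [sum_powerset_neg_one_pow_card]

lemma card_add_le_of_mem_markedOccurrences {x : Σ _ : Fin k → Fin n, Finset (Fin n)}
    (hx : x ∈ markedOccurrences σ R τ) : #x.2 + k ≤ n := by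
  obtain ⟨f, S⟩ := x
  obtain ⟨hf, hS⟩ := (mem_markedOccurrences σ R τ).mp hx
  have := card_union_of_disjoint ((disjoint_shadedPoints_image τ f R).mono_left hS)
  rw [card_image_of_injective _ (mem_occurrences.mp hf).1.injective, card_univ,
    Fintype.card_fin] at this
  simpa [← this] using card_le_univ (S ∪ univ.image f)

theorem meshOcc_compl_eq_sum :
    (meshOcc σ Rᶜ τ : ℤ) =
      ∑ m ∈ range (n + 1), ∑ ρ : Equiv.Perm (Fin m),
        (-1 : ℤ) ^ (m + k) * (meshOcc σ R ρ : ℤ) * (occ ρ τ : ℤ) := by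
  rw [meshOcc_eq_sum_neg_one_pow, ← sum_fiberwise_of_maps_to (g := fun x => #x.2 + k)
    fun _ hx => mem_range.mpr <|
      Nat.lt_succ_of_le (card_add_le_of_mem_markedOccurrences σ Rᶜ τ hx)]
  refine sum_congr rfl fun m _ => ?_
  calc ∑ x ∈ markedOccurrences σ Rᶜ τ with #x.2 + k = m, (-1 : ℤ) ^ #x.2
      = ∑ x ∈ markedOccurrences σ Rᶜ τ with #x.2 + k = m, (-1 : ℤ) ^ (m + k) := by
        refine sum_congr rfl fun x hx => ?_
        rw [← (mem_filter.mp hx).2, add_assoc, pow_add, ← two_mul, pow_mul]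
        simp
    _ = (-1 : ℤ) ^ (m + k) * #(chains σ R τ m) := by
        rw [sum_const, card_chains, nsmul_eq_mul, mul_comm]
    _ = _ := by
        rw [card_chains_eq_sum]
        push_cast
        simp only [mul_sum, mul_assoc]

end Reciprocity

/-- The Reciprocity Theorem for mesh patterns: for a mesh pattern `p = (σ, R)` with
`σ ∈ S_k` and its dual `p* = (σ, Rᶜ)`, for every permutation `τ ∈ S_n`,
`p*(τ) = ∑_ρ (-1)^{|σ|-|ρ|} p(ρ) occ(ρ, τ)` and, equivalently,
`p(τ) = ∑_ρ (-1)^{|ρ|-|σ|} p*(ρ) occ(ρ, τ)`, the sums being over all classical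
patterns `ρ` of each size `m ≤ n` (larger patterns do not occur in `τ`).  The sign
`(-1)^{|σ|-|ρ|} = (-1)^{|ρ|-|σ|}` is written `(-1)^(m+k)`, which agrees with it. -/
theorem mesh_reciprocity {k n : ℕ} (σ : Equiv.Perm (Fin k))
    (R : Finset (Fin (k + 1) × Fin (k + 1))) (τ : Equiv.Perm (Fin n)) :
    ((meshOcc σ Rᶜ τ : ℤ) =
      ∑ m ∈ range (n + 1), ∑ ρ : Equiv.Perm (Fin m),
        (-1 : ℤ) ^ (m + k) * (meshOcc σ R ρ : ℤ) * (occ ρ τ : ℤ)) ∧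
    ((meshOcc σ R τ : ℤ) =
      ∑ m ∈ range (n + 1), ∑ ρ : Equiv.Perm (Fin m),
        (-1 : ℤ) ^ (m + k) * (meshOcc σ Rᶜ ρ : ℤ) * (occ ρ τ : ℤ)) :=
  ⟨meshOcc_compl_eq_sum σ R τ, by simpa using meshOcc_compl_eq_sum σ Rᶜ τ⟩
end

section
/- The number of left-to-right maxima of any permutation τ equals ∑_{π : π(|π|) = 1} (-1)^{|π|-1} · occ(π, τ), where the sum is over all nonempty permutations π ending in their smallest letter and occ(π, τ) is the number of classical occurrences of π in τ. -/
open Finset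

/-- The number of left-to-right maxima of `τ`: positions `j` with `τ(i) < τ(j)`
for all `i < j`. -/
def lmax {n : ℕ} (τ : Equiv.Perm (Fin n)) : ℕ :=
  (univ.filter fun j : Fin n => ∀ i : Fin n, i < j → τ i < τ j).card

/-!
Grouping the occurrences of all patterns ending in `1` by their index map `f`, the sum counts,
with sign `(-1)^m`, the increasing maps `f : Fin (m + 1) → Fin n` at whose last index `τ ∘ f` is
smallest (each such `f` is an occurrence of exactly one pattern). Fixing the last value `j`, these
maps are the choices of `m` positions among the set `largerBefore τ j` of positions before `j`
carrying a larger value than `τ j`, so the signed count for `j` is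
`∑ m, (-1)^m * (#(largerBefore τ j)).choose m`, which is `1` if that set is empty, i.e. if `j` is a
left-to-right maximum, and `0` otherwise.
-/

theorem Fin.strictMono_snoc_iff {α : Type*} [Preorder α] {m : ℕ} {g : Fin m → α} {x : α} :
    StrictMono (Fin.snoc g x : Fin (m + 1) → α) ↔ StrictMono g ∧ ∀ i, g i < x := by
  constructor
  · intro h
    refine ⟨fun a b hab => ?_, fun i => ?_⟩
    · simpa using h (Fin.castSucc_lt_castSucc_iff.2 hab)
    · simpa using h (Fin.castSucc_lt_last i)
  · rintro ⟨hg, hx⟩ a b hab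
    cases b using Fin.lastCases with
    | last =>
      cases a using Fin.lastCases with
      | last => exact absurd hab (lt_irrefl _)
      | cast a => simpa using hx a
    | cast b =>
      cases a using Fin.lastCases with
      | last => exact absurd hab (not_lt.2 (Fin.le_last _))
      | cast a => simpa using hg (Fin.castSucc_lt_castSucc_iff.1 hab)

theorem card_strictMono_forall_mem {α : Type*} [LinearOrder α] [Fintype α] (A : Finset α)
    (m : ℕ) : #{g : Fin m → α | StrictMono g ∧ ∀ i, g i ∈ A} = (#A).choose m := by
  rw [← card_powersetCard]
  refine card_bij' (fun g _ => univ.image g)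
    (fun T hT => T.orderEmbOfFin (mem_powersetCard.1 hT).2) ?_ ?_ ?_ ?_
  · intro g hg
    simp only [mem_filter, mem_univ, true_and] at hg
    rw [mem_powersetCard, card_image_of_injective _ hg.1.injective, card_univ, Fintype.card_fin]
    exact ⟨fun x hx => by obtain ⟨i, -, rfl⟩ := mem_image.1 hx; exact hg.2 i, rfl⟩
  · intro T hT
    simp only [mem_filter, mem_univ, true_and]
    exact ⟨(T.orderEmbOfFin _).strictMono,
      fun i => (mem_powersetCard.1 hT).1 (T.orderEmbOfFin_mem _ i)⟩
  · intro g hg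
    exact (orderEmbOfFin_unique _ (fun i => mem_image_of_mem g (mem_univ i))
      (mem_filter.1 hg).2.1).symm
  · intro T _
    exact image_orderEmbOfFin_univ _ _

theorem Int.alternating_sum_range_choose_of_lt {a n : ℕ} (h : a < n) :
    ∑ m ∈ Finset.range n, ((-1) ^ m * a.choose m : ℤ) = if a = 0 then 1 else 0 := by
  rw [← Int.alternating_sum_range_choose]
  refine (sum_subset (range_subset_range.2 h) fun m _ hm => ?_).symm
  rw [Nat.choose_eq_zero_of_lt (by simp only [mem_range] at hm; omega), Nat.cast_zero, mul_zero]

section Pattern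

variable {α : Type*} [LinearOrder α] {k : ℕ}

theorem lt_iff_lt_iff_eq_sort_symm {g : Fin k → α} (hg : Function.Injective g)
    (π : Equiv.Perm (Fin k)) :
    (∀ i j, π i < π j ↔ g i < g j) ↔ π = (Tuple.sort g).symm := by
  constructor
  · intro h
    have hsort : π.symm = Tuple.sort g :=
      Tuple.eq_sort_iff.2 ⟨fun a b hab => ?_, fun a b hab he => ?_⟩
    · rw [← hsort, Equiv.symm_symm]
    · exact not_lt.1 fun hlt => not_lt.2 hab (by simpa using (h _ _).2 hlt)
    · exact absurd (hg he) (π.symm.injective.ne hab.ne)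
  · rintro rfl i j
    have hsort : StrictMono (g ∘ Tuple.sort g) :=
      (Tuple.monotone_sort g).strictMono_of_injective (hg.comp (Tuple.sort g).injective)
    simpa using (hsort.lt_iff_lt (a := (Tuple.sort g).symm i) (b := (Tuple.sort g).symm j)).symm

theorem apply_eq_zero_iff_of_lt_iff {π : Equiv.Perm (Fin (k + 1))} {g : Fin (k + 1) → α}
    (h : ∀ i j, π i < π j ↔ g i < g j) (a : Fin (k + 1)) : π a = 0 ↔ ∀ i, g a ≤ g i := by
  have hle : ∀ i, π a ≤ π i ↔ g a ≤ g i := fun i => not_lt.symm.trans ((h i a).not.trans not_lt)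
  simp only [← hle]
  constructor
  · intro h0 i
    rw [h0]
    exact Fin.zero_le _
  · intro hmin
    obtain ⟨i, hi⟩ := π.surjective 0
    exact Fin.le_zero_iff.1 (hi ▸ hmin i)

end Pattern

section Permutation

variable {n : ℕ} (τ : Equiv.Perm (Fin n))

def minLastOccurrences (m : ℕ) : Finset (Fin (m + 1) → Fin n) :=
  {f | StrictMono f ∧ ∀ i, τ (f (Fin.last m)) ≤ τ (f i)}

def largerBefore (j : Fin n) : Finset (Fin n) :=
  {i | i < j ∧ τ j < τ i}

theorem sum_occ_eq_card_minLastOccurrences (m : ℕ) :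
    ∑ π : Equiv.Perm (Fin (m + 1)) with π (Fin.last m) = 0, occ π τ =
      #(minLastOccurrences τ m) := by
  have hpattern {f : Fin (m + 1) → Fin n} (hf : StrictMono f) :=
    lt_iff_lt_iff_eq_sort_symm (τ.injective.comp hf.injective)
  rw [card_eq_sum_card_fiberwise (f := fun f => (Tuple.sort fun i => τ (f i)).symm)
    (t := {π | π (Fin.last m) = 0}) fun f hf => ?_]
  · refine sum_congr rfl fun π hπ => ?_
    rw [occ]
    congr 1
    ext f
    simp only [minLastOccurrences, mem_filter, mem_univ, true_and] at hπ ⊢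
    constructor
    · rintro ⟨hf, hπf⟩
      exact ⟨⟨hf, (apply_eq_zero_iff_of_lt_iff hπf _).1 hπ⟩, ((hpattern hf π).1 hπf).symm⟩
    · rintro ⟨⟨hf, -⟩, rfl⟩
      exact ⟨hf, (hpattern hf _).2 rfl⟩
  · obtain ⟨hf, hmin⟩ := (mem_filter.1 hf).2
    simp only [coe_filter, mem_univ, true_and]
    exact (apply_eq_zero_iff_of_lt_iff ((hpattern hf _).2 rfl) _).2 hmin

variable {τ}

theorem snoc_mem_minLastOccurrences_iff {m : ℕ} {g : Fin m → Fin n} {j : Fin n} :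
    (Fin.snoc g j : Fin (m + 1) → Fin n) ∈ minLastOccurrences τ m ↔
      StrictMono g ∧ ∀ i, g i ∈ largerBefore τ j := by
  simp only [minLastOccurrences, largerBefore, mem_filter, mem_univ, true_and,
    Fin.strictMono_snoc_iff]
  rw [Fin.forall_fin_succ']
  simp only [Fin.snoc_castSucc, Fin.snoc_last, le_refl, and_true]
  constructor
  · rintro ⟨⟨hg, hlt⟩, hle⟩
    exact ⟨hg, fun i => ⟨hlt i, (τ.injective.ne (hlt i).ne').le_iff_lt.1 (hle i)⟩⟩
  · rintro ⟨hg, h⟩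
    exact ⟨⟨hg, fun i => (h i).1⟩, fun i => (h i).2.le⟩

variable (τ)

theorem card_minLastOccurrences_filter_last (m : ℕ) (j : Fin n) :
    #{f ∈ minLastOccurrences τ m | f (Fin.last m) = j} = (#(largerBefore τ j)).choose m := by
  rw [← card_strictMono_forall_mem]
  refine card_nbij' Fin.init (fun g => Fin.snoc g j) (fun f hf => ?_) (fun g hg => ?_)
    (fun f hf => ?_) (fun g _ => Fin.init_snoc _ _)
  · obtain ⟨hf, hj⟩ := mem_filter.1 hf
    have hsnoc : Fin.snoc (Fin.init f) j ∈ minLastOccurrences τ m := by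
      rwa [← hj, Fin.snoc_init_self]
    simpa using snoc_mem_minLastOccurrences_iff.1 hsnoc
  · simpa [snoc_mem_minLastOccurrences_iff] using hg
  · obtain ⟨-, rfl⟩ := mem_filter.1 hf
    exact Fin.snoc_init_self f

theorem card_minLastOccurrences (m : ℕ) :
    #(minLastOccurrences τ m) = ∑ j, (#(largerBefore τ j)).choose m := by
  rw [card_eq_sum_card_fiberwise fun f _ => mem_univ (f (Fin.last m))]
  exact sum_congr rfl fun j _ => card_minLastOccurrences_filter_last τ m j

theorem card_largerBefore_lt (j : Fin n) : #(largerBefore τ j) < n := by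
  simpa using card_lt_univ_of_notMem (x := j) (by simp [largerBefore])

theorem largerBefore_eq_empty_iff (j : Fin n) :
    largerBefore τ j = ∅ ↔ ∀ i, i < j → τ i < τ j := by
  simp only [largerBefore, filter_eq_empty_iff, mem_univ, true_implies, not_and, not_lt]
  exact forall₂_congr fun i hi => (τ.injective.ne hi.ne).le_iff_lt

end Permutation

/-- `lmax τ = ∑_{π : π(|π|) = 1} (-1)^{|π|-1} occ(π, τ)`, summed over all nonempty
permutations `π` ending in their smallest letter.  Patterns longer than `τ`
contribute `0`, so the sum ranges over sizes `m + 1 ∈ [1, n]`. -/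
theorem lmax_expansion (n : ℕ) (τ : Equiv.Perm (Fin n)) :
    (lmax τ : ℤ) =
      ∑ m ∈ range n, ∑ π : Equiv.Perm (Fin (m + 1)),
        if π (Fin.last m) = 0 then (-1 : ℤ) ^ m * (occ π τ : ℤ) else 0 := by
  calc (lmax τ : ℤ)
      = ∑ j, ∑ m ∈ range n, (-1) ^ m * ((#(largerBefore τ j)).choose m : ℤ) := by
        simp only [lmax, natCast_card_filter, ← largerBefore_eq_empty_iff, ← Finset.card_eq_zero,
          Int.alternating_sum_range_choose_of_lt, card_largerBefore_lt]
    _ = ∑ m ∈ range n, (-1) ^ m * (#(minLastOccurrences τ m) : ℤ) := by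
        simp only [card_minLastOccurrences, Nat.cast_sum, mul_sum]
        exact sum_comm
    _ = _ := by
        refine sum_congr rfl fun m _ => ?_
        rw [← sum_occ_eq_card_minLastOccurrences, ← sum_filter, Nat.cast_sum, mul_sum]
end

section
/- For each k ∈ ℤ, the statistic exc_k, counting the entries x = τ(j) of a permutation τ with excess x − j = k, satisfies exc_k(τ) = ∑_π (-1)^{|π|-k-1} (∑_{x ∈ SSF(π)} C(|π|-1, x-k-1)) · occ(π, τ), where SSF(π) is the set of skew strong fixed point values of π. -/
/-!
Write `D t` for the set of positions forming an inversion with position `t` of `τ`, and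
`R t ⊆ D t` for those to the right of `t` (equivalently, below `τ t`). An occurrence of a
pattern `π` of length `m + 1` in `τ` is a set `T` of `m + 1` positions, and a skew strong
fixed point of `π` is a `t ∈ T` with `T \ {t} ⊆ D t`; its (0-indexed) value in `π` is
`#(T ∩ R t)`. Hence the right-hand side equals
  `∑ t, ∑ S ⊆ D t, (-1)^(#S - k) C(#S, #(S ∩ R t) - k)`.
Peeling off one element of `D t` at a time with Pascal's rule shows that the inner sum is `1`
if `#(R t) - #(D t \ R t) = k` and `0` otherwise, and `#(R t) - #(D t \ R t) = τ t - t`.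
-/

open Finset

/-- Binomial coefficient `C(a, b)` with an integer lower index, `0` when `b < 0`. -/
def ichoose (a : ℕ) (b : ℤ) : ℕ :=
  if 0 ≤ b then a.choose b.toNat else 0

/-- The set of positions of skew strong fixed points of `π`: positions `j` such that
no `i < j` has `π(i) < π(j)` and no `i > j` has `π(i) > π(j)`.  (Summing over these
positions is the same as summing over the skew strong fixed point values `x = π(j)`.) -/
def ssfPos {n : ℕ} (π : Equiv.Perm (Fin n)) : Finset (Fin n) :=
  univ.filter fun j : Fin n =>
    (∀ i : Fin n, i < j → π j < π i) ∧ (∀ i : Fin n, j < i → π i < π j)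

lemma ichoose_succ (s : ℕ) (c : ℤ) :
    ichoose (s + 1) c = ichoose s c + ichoose s (c - 1) := by
  unfold ichoose
  rcases lt_trichotomy c 0 with h | rfl | h
  · rw [if_neg (by omega), if_neg (by omega), if_neg (by omega)]
  · simp
  · rw [if_pos h.le, if_pos h.le, if_pos (by omega), show c.toNat = (c - 1).toNat + 1 by omega,
      Nat.choose_succ_succ', add_comm]

lemma ichoose_zero_left (c : ℤ) : ichoose 0 c = if c = 0 then 1 else 0 := by
  unfold ichoose
  rcases lt_trichotomy c 0 with h | rfl | h
  · simp [show ¬ 0 ≤ c by omega, h.ne]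
  · simp
  · simp [h.le, h.ne', Nat.choose_eq_zero_iff.2 (show 0 < c.toNat by omega)]

/-- With `m = |π| - 1` and `c = x - 1` this is the weight `(-1)^(|π|-k-1) C(|π|-1, x-k-1)`. -/
def excWeight (k : ℤ) (m c : ℕ) : ℚ :=
  (-1) ^ ((m : ℤ) - k) * ichoose m ((c : ℤ) - k)

lemma excWeight_zero_zero (k : ℤ) : excWeight k 0 0 = if k = 0 then 1 else 0 := by
  by_cases hk : k = 0 <;> simp [excWeight, ichoose_zero_left, hk]

lemma excWeight_succ_left (k : ℤ) (m c : ℕ) :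
    excWeight k (m + 1) c = excWeight (k + 1) m c - excWeight k m c := by
  have hsign : (-1 : ℚ) ^ (((m + 1 : ℕ) : ℤ) - k) = -(-1) ^ ((m : ℤ) - k) := by
    rw [show ((m + 1 : ℕ) : ℤ) - k = (m - k) + 1 by push_cast; ring,
      zpow_add_one₀ (by norm_num), mul_neg_one]
  have hsign' : (-1 : ℚ) ^ ((m : ℤ) - (k + 1)) = -(-1) ^ ((m : ℤ) - k) := by
    rw [show (m : ℤ) - (k + 1) = (m - k) - 1 by ring, zpow_sub_one₀ (by norm_num), inv_neg_one,
      mul_neg_one]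
  rw [excWeight, excWeight, excWeight, ichoose_succ, hsign, hsign',
    show (c : ℤ) - k - 1 = c - (k + 1) by ring]
  push_cast
  ring

lemma excWeight_succ_right (k : ℤ) (m c : ℕ) :
    excWeight k m (c + 1) = -excWeight (k - 1) m c := by
  have hsign : (-1 : ℚ) ^ ((m : ℤ) - (k - 1)) = -(-1) ^ ((m : ℤ) - k) := by
    rw [show (m : ℤ) - (k - 1) = (m - k) + 1 by ring, zpow_add_one₀ (by norm_num), mul_neg_one]
  rw [excWeight, excWeight, hsign, show ((c + 1 : ℕ) : ℤ) - k = c - (k - 1) by push_cast; ring]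
  ring

lemma excWeight_succ_succ (k : ℤ) (m c : ℕ) :
    excWeight k (m + 1) (c + 1) = excWeight (k - 1) m c - excWeight k m c := by
  rw [excWeight_succ_left, excWeight_succ_right, excWeight_succ_right, add_sub_cancel_right]
  ring

theorem sum_powerset_excWeight {α : Type*} [DecidableEq α] (p : α → Prop) [DecidablePred p]
    (U : Finset α) (k : ℤ) :
    ∑ S ∈ U.powerset, excWeight k #S #{s ∈ S | p s} =
      if (#{s ∈ U | p s} : ℤ) - #{s ∈ U | ¬ p s} = k then 1 else 0 := by
  induction U using Finset.induction_on generalizing k with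
  | empty => simp [excWeight_zero_zero, eq_comm]
  | insert a U ha ih =>
    have hstep : ∀ S ∈ U.powerset, excWeight k #(insert a S) #{s ∈ insert a S | p s} =
        excWeight (if p a then k - 1 else k + 1) #S #{s ∈ S | p s} -
          excWeight k #S #{s ∈ S | p s} := by
      intro S hS
      have haS : a ∉ S := fun h => ha (mem_powerset.1 hS h)
      rw [card_insert_of_notMem haS, filter_insert]
      split_ifs
      · rw [card_insert_of_notMem fun h => haS (mem_filter.1 h).1, excWeight_succ_succ]
      · rw [excWeight_succ_left]
    have haU : ∀ q : α → Prop, [DecidablePred q] → a ∉ U.filter q :=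
      fun q _ h => ha (mem_filter.1 h).1
    have hcond : (#{s ∈ U | p s} : ℤ) - #{s ∈ U | ¬ p s} = (if p a then k - 1 else k + 1) ↔
        (#{s ∈ insert a U | p s} : ℤ) - #{s ∈ insert a U | ¬ p s} = k := by
      by_cases hpa : p a <;> simp [hpa, filter_insert, card_insert_of_notMem (haU _)] <;> omega
    rw [sum_powerset_insert ha, sum_congr rfl hstep, sum_sub_distrib, add_sub_cancel, ih]
    simp only [hcond]

lemma Equiv.Perm.val_apply_eq_card_filter_lt {N : ℕ} (π : Equiv.Perm (Fin N)) (j : Fin N) :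
    (π j : ℕ) = #{i | π i < π j} :=
  calc (π j : ℕ) = #(Iio (π j)) := (Fin.card_Iio _).symm
    _ = #(({i | π i < π j} : Finset _).map π.toEmbedding) := by
      congr 1; ext; simp [mem_map_equiv]
    _ = _ := card_map _

open scoped symmDiff

section Inversions

variable {n : ℕ} {τ : Equiv.Perm (Fin n)}

def inversionPartners (τ : Equiv.Perm (Fin n)) (t : Fin n) : Finset (Fin n) :=
  Iio t ∆ ({s | τ s < τ t} : Finset (Fin n))

lemma mem_inversionPartners_of_ne {s t : Fin n} (hst : s ≠ t) :
    s ∈ inversionPartners τ t ↔ (s < t ↔ τ t < τ s) := by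
  have hτ : τ s < τ t ↔ ¬ τ t < τ s := by
    rw [not_lt, (τ.injective.ne hst).le_iff_lt]
  simp only [inversionPartners, mem_symmDiff, mem_Iio, mem_filter, mem_univ, true_and, hτ]
  tauto

lemma notMem_inversionPartners_self (t : Fin n) : t ∉ inversionPartners τ t := by
  simp [inversionPartners, mem_symmDiff]

lemma card_inversionPartners_lt (t : Fin n) : #(inversionPartners τ t) < n := by
  simpa using card_lt_univ_of_notMem (notMem_inversionPartners_self (τ := τ) t)

lemma card_filter_inversionPartners_sub (t : Fin n) :
    (#{s ∈ inversionPartners τ t | τ s < τ t} : ℤ) -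
      #{s ∈ inversionPartners τ t | ¬ τ s < τ t} = (τ t : ℤ) - t := by
  set B : Finset (Fin n) := {s | τ s < τ t}
  have hB : {s ∈ inversionPartners τ t | τ s < τ t} = B \ Iio t := by
    ext s
    simp only [inversionPartners, B, mem_symmDiff, mem_filter, mem_sdiff, mem_Iio, mem_univ,
      true_and]
    tauto
  have hA : {s ∈ inversionPartners τ t | ¬ τ s < τ t} = Iio t \ B := by
    ext s
    simp only [inversionPartners, B, mem_symmDiff, mem_filter, mem_sdiff, mem_Iio, mem_univ,
      true_and]
    tauto
  have h1 := card_sdiff_add_card_inter B (Iio t)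
  have h2 := card_sdiff_add_card_inter (Iio t) B
  rw [inter_comm, Fin.card_Iio] at h2
  rw [← τ.val_apply_eq_card_filter_lt] at h1
  rw [hB, hA]
  omega

end Inversions

section Pattern

variable {N : ℕ} {α : Type*} [LinearOrder α] {g : Fin N → α}

def pattern (g : Fin N → α) : Equiv.Perm (Fin N) :=
  (Tuple.sort g).symm

lemma pattern_lt_pattern_iff (hg : Function.Injective g) {i j : Fin N} :
    pattern g i < pattern g j ↔ g i < g j := by
  have hmono : StrictMono (g ∘ Tuple.sort g) :=
    (Tuple.monotone_sort g).strictMono_of_injective (hg.comp (Tuple.sort g).injective)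
  rw [← hmono.lt_iff_lt]
  simp [pattern]

lemma pattern_eq_iff (hg : Function.Injective g) (π : Equiv.Perm (Fin N)) :
    pattern g = π ↔ ∀ i j, π i < π j ↔ g i < g j := by
  refine ⟨fun h i j => h ▸ pattern_lt_pattern_iff hg, fun h => ?_⟩
  have hsort : π.symm = Tuple.sort g := by
    refine Tuple.eq_sort_iff.2 ⟨fun a b hab => ?_, fun i j hij he =>
      absurd (π.symm.injective (hg he)) hij.ne⟩
    rcases hab.lt_or_eq with hab | rfl
    · exact ((h _ _).1 (by simpa using hab)).le
    · rfl
  rw [pattern, ← hsort, Equiv.symm_symm]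

lemma pattern_val (hg : Function.Injective g) (j : Fin N) :
    (pattern g j : ℕ) = #{i | g i < g j} := by
  simp only [(pattern g).val_apply_eq_card_filter_lt, pattern_lt_pattern_iff hg]

end Pattern

section Occurrences

variable {k n : ℕ}

open scoped Classical in
lemma occ_eq_card_filter_pattern (π : Equiv.Perm (Fin k)) (τ : Equiv.Perm (Fin n)) :
    occ π τ = #{f : Fin k → Fin n | StrictMono f ∧ pattern (τ ∘ f) = π} := by
  unfold occ
  congr 1
  refine filter_congr fun f _ => and_congr_right fun hf => ?_
  exact (pattern_eq_iff (τ.injective.comp (StrictMono.injective hf)) π).symm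

open scoped Classical in
lemma sum_mul_occ_s9 {R : Type*} [CommSemiring R] (τ : Equiv.Perm (Fin n))
    (F : Equiv.Perm (Fin k) → R) :
    ∑ π, F π * occ π τ =
      ∑ f : Fin k → Fin n with StrictMono f, F (pattern (τ ∘ f)) := by
  rw [← sum_fiberwise _ (fun f => pattern (τ ∘ f))]
  refine sum_congr rfl fun π _ => ?_
  rw [sum_congr rfl fun f hf => congrArg F (mem_filter.1 hf).2, sum_const, filter_filter,
    occ_eq_card_filter_pattern, nsmul_eq_mul, mul_comm]

end Occurrences

lemma mem_ssfPos_iff {N : ℕ} (π : Equiv.Perm (Fin N)) (j : Fin N) :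
    j ∈ ssfPos π ↔ ∀ i, i ≠ j → (i < j ↔ π j < π i) := by
  simp only [ssfPos, mem_filter, mem_univ, true_and]
  constructor
  · rintro ⟨hleft, hright⟩ i hij
    rcases lt_or_gt_of_ne hij with hi | hi
    · exact iff_of_true hi (hleft i hi)
    · exact iff_of_false hi.not_gt (hright i hi).not_gt
  · intro h
    refine ⟨fun i hi => (h i hi.ne).1 hi, fun i hi => ?_⟩
    rcases lt_or_gt_of_ne (π.injective.ne hi.ne') with h' | h'
    · exact h'
    · exact absurd ((h i hi.ne').2 h') hi.not_gt

section Embeddings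

variable {k n : ℕ} {τ : Equiv.Perm (Fin n)} {f : Fin k → Fin n}

lemma mem_ssfPos_pattern_iff (hf : StrictMono f) (j : Fin k) :
    j ∈ ssfPos (pattern (τ ∘ f)) ↔
      (univ.image f).erase (f j) ⊆ inversionPartners τ (f j) := by
  have hinj : Function.Injective (τ ∘ f) := τ.injective.comp hf.injective
  have hsub : (univ.image f).erase (f j) ⊆ inversionPartners τ (f j) ↔
      ∀ i, i ≠ j → f i ∈ inversionPartners τ (f j) := by
    refine ⟨fun h i hij => h (mem_erase.2 ⟨hf.injective.ne hij, mem_image_of_mem f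
      (mem_univ i)⟩), fun h s hs => ?_⟩
    obtain ⟨hne, hs⟩ := mem_erase.1 hs
    obtain ⟨i, -, rfl⟩ := mem_image.1 hs
    exact h i fun e => hne (e ▸ rfl)
  rw [mem_ssfPos_iff, hsub]
  refine forall_congr' fun i => imp_congr_right fun hij => ?_
  rw [mem_inversionPartners_of_ne (hf.injective.ne hij), hf.lt_iff_lt,
    pattern_lt_pattern_iff hinj]
  rfl

lemma sum_ssfPos_pattern {M : Type*} [AddCommMonoid M] (hf : StrictMono f) (c : ℕ → M) :
    ∑ j ∈ ssfPos (pattern (τ ∘ f)), c (pattern (τ ∘ f) j) =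
      ∑ t ∈ univ.image f with (univ.image f).erase t ⊆ inversionPartners τ t,
        c #{s ∈ univ.image f | τ s < τ t} := by
  refine sum_nbij f (fun j hj => ?_) (hf.injective.injOn) (fun t ht => ?_) (fun j _ => ?_)
  · simpa [mem_filter] using (mem_ssfPos_pattern_iff hf j).1 hj
  · obtain ⟨j, -, rfl⟩ := mem_image.1 (mem_filter.1 ht).1
    exact ⟨j, (mem_ssfPos_pattern_iff hf j).2 (mem_filter.1 ht).2, rfl⟩
  · rw [pattern_val (τ.injective.comp hf.injective), filter_image,
      card_image_of_injective _ hf.injective]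
    rfl

end Embeddings

open scoped Classical in
lemma sum_strictMono_image {α M : Type*} [Fintype α] [LinearOrder α] [AddCommMonoid M] (k : ℕ)
    (H : Finset α → M) :
    ∑ f : Fin k → α with StrictMono f, H (univ.image f) =
      ∑ T ∈ powersetCard k univ, H T := by
  refine sum_nbij (fun f => univ.image f) (fun f hf => ?_) (fun f hf g hg hfg => ?_)
    (fun T hT => ?_) (fun _ _ => rfl)
  · have hf := (mem_filter.1 hf).2
    simp [mem_powersetCard, card_image_of_injective _ hf.injective]
  · have hf' := (mem_filter.1 hf).2
    have hfg : univ.image f = univ.image g := hfg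
    have hcard : #(univ.image f) = k := by simp [card_image_of_injective _ hf'.injective]
    have e1 := orderEmbOfFin_unique hcard (fun x => mem_image_of_mem f (mem_univ x)) hf'
    have e2 := orderEmbOfFin_unique hcard
      (fun x => by rw [hfg]; exact mem_image_of_mem g (mem_univ x)) (mem_filter.1 hg).2
    exact e1.trans e2.symm
  · have hcard := (mem_powersetCard.1 hT).2
    refine ⟨T.orderEmbOfFin hcard, by simpa using (T.orderEmbOfFin hcard).strictMono, ?_⟩
    simp [image_orderEmbOfFin_univ]

lemma sum_powersetCard_succ_erase_subset {α M : Type*} [Fintype α] [DecidableEq α]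
    [AddCommMonoid M] (D : α → Finset α) (hD : ∀ t, t ∉ D t) (m : ℕ)
    (g : α → Finset α → M) :
    ∑ T ∈ powersetCard (m + 1) univ, ∑ t ∈ T with T.erase t ⊆ D t, g t T =
      ∑ t, ∑ S ∈ powersetCard m (D t), g t (insert t S) := by
  rw [sum_comm' (t' := univ)
    (s' := fun t => {T ∈ powersetCard (m + 1) univ | t ∈ T ∧ T.erase t ⊆ D t})
    (fun T t => by simp [mem_filter])]
  refine sum_congr rfl fun t _ => sum_nbij' (fun T => T.erase t) (insert t) ?_ ?_ ?_ ?_ ?_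
  · intro T hT
    obtain ⟨hT, htT, hsub⟩ := mem_filter.1 hT
    rw [mem_powersetCard, card_erase_of_mem htT, (mem_powersetCard.1 hT).2]
    exact ⟨hsub, rfl⟩
  · intro S hS
    obtain ⟨hsub, hcard⟩ := mem_powersetCard.1 hS
    have htS : t ∉ S := fun h => hD t (hsub h)
    simp [mem_filter, card_insert_of_notMem htS, hcard, erase_insert htS, hsub]
  · intro T hT
    exact insert_erase (mem_filter.1 hT).2.1
  · intro S hS
    exact erase_insert fun h => hD t ((mem_powersetCard.1 hS).1 h)
  · intro T hT
    rw [insert_erase (mem_filter.1 hT).2.1]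

lemma sum_range_sum_powersetCard {α M : Type*} [AddCommMonoid M] {s : Finset α} {n : ℕ}
    (hs : #s < n) (F : Finset α → M) :
    ∑ m ∈ range n, ∑ S ∈ powersetCard m s, F S = ∑ S ∈ s.powerset, F S := by
  rw [sum_powerset]
  refine (sum_subset (range_subset_range.2 hs) fun m _ hm => ?_).symm
  rw [powersetCard_eq_empty.2 (by simpa using hm), sum_empty]

/-- The 1-indexed value of `π` at position `j` is `π j + 1`. -/
theorem exc_k_expansion (n : ℕ) (k : ℤ) (τ : Equiv.Perm (Fin n)) :
    ((univ.filter fun j : Fin n => (τ j : ℤ) - (j : ℤ) = k).card : ℚ) =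
      ∑ m ∈ range n, ∑ π : Equiv.Perm (Fin (m + 1)),
        (-1 : ℚ) ^ (((m : ℤ) + 1) - k - 1) *
          (∑ j ∈ ssfPos π, (ichoose m (((π j : ℤ) + 1) - k - 1) : ℚ)) *
          (occ π τ : ℚ) := by
  classical
  calc ((univ.filter fun j : Fin n => (τ j : ℤ) - (j : ℤ) = k).card : ℚ)
      = ∑ t, ∑ S ∈ (inversionPartners τ t).powerset,
          excWeight k #S #{s ∈ S | τ s < τ t} := by
        simp only [sum_powerset_excWeight, card_filter_inversionPartners_sub, sum_boole]
    _ = ∑ m ∈ range n, ∑ t, ∑ S ∈ powersetCard m (inversionPartners τ t),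
          excWeight k m #{s ∈ insert t S | τ s < τ t} := by
        rw [sum_comm]
        refine sum_congr rfl fun t _ => ?_
        rw [← sum_range_sum_powersetCard (card_inversionPartners_lt t)]
        refine sum_congr rfl fun m _ => sum_congr rfl fun S hS => ?_
        rw [filter_insert, if_neg (lt_irrefl _), (mem_powersetCard.1 hS).2]
    _ = ∑ m ∈ range n, ∑ f : Fin (m + 1) → Fin n with StrictMono f,
          ∑ j ∈ ssfPos (pattern (τ ∘ f)), excWeight k m (pattern (τ ∘ f) j) := by
        refine sum_congr rfl fun m _ => ?_
        refine (sum_powersetCard_succ_erase_subset _ notMem_inversionPartners_self m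
          fun t T => excWeight k m #{s ∈ T | τ s < τ t}).symm.trans ?_
        refine (sum_strictMono_image (M := ℚ) (m + 1) _).symm.trans ?_
        exact sum_congr rfl fun f hf => (sum_ssfPos_pattern (mem_filter.1 hf).2 _).symm
    _ = _ := by
        refine sum_congr rfl fun m _ => ?_
        symm
        refine (sum_mul_occ_s9 τ _).trans ?_
        refine sum_congr rfl fun π _ => ?_
        have hshift : ∀ a : ℤ, a + 1 - k - 1 = a - k := fun a => by ring
        simp only [excWeight, mul_sum, hshift]
end

section
/- A permutation π ∈ S_n with π(n) = n, written as the concatenation π = L·1·R around its minimum value 1, is an André permutation of the first kind if and only if both L and R (viewed as permutations of their respective totally ordered letter sets) are André permutations of the first kind. -/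
open Finset

/-- `w` is an André word (an André permutation of the first kind of its set of
letters, listed in positions `0, 1, 2, …`): for every position `i` and every element
`w k ∈ λ(w i)` — i.e. `k < i` and every entry in the window `[k, i)` is `≥ w i`, so
that `k` lies strictly between `i` and the nearest position to the left of `i`
holding a smaller entry — there is an element `w k' ∈ ρ(w i)` with `w k ≤ w k'`,
i.e. `k' > i`, every entry in the window `(i, k']` is `≥ w i`, and `w k ≤ w k'`.
This says exactly `max λ(x) ≤ max ρ(x)` for every letter `x` (with `max ∅ = -∞`). -/
def AndreWord (w : List ℤ) : Prop :=
  ∀ i, i < w.length →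
    ∀ k, k < i → (∀ l, k ≤ l → l < i → ¬ (w.getD l 0 < w.getD i 0)) →
      ∃ k', i < k' ∧ k' < w.length ∧
        (∀ l, i < l → l ≤ k' → ¬ (w.getD l 0 < w.getD i 0)) ∧
        w.getD k 0 ≤ w.getD k' 0

/-- Let `π ∈ S_n` (a word `w` of length `n` on the letters `1, …, n`, each occurring
once) with last letter `π(n) = n`, written as the concatenation `π = L·1·R` around
its minimum letter `1`.  Then `π` is an André permutation of the first kind iff both
`L` and `R` (as words on their respective totally ordered letter sets) are André
permutations of the first kind. -/
theorem andre_decomposition (n : ℕ) (hn : 1 ≤ n) (w : List ℤ)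
    (hlen : w.length = n) (hnodup : w.Nodup)
    (hletters : ∀ x : ℤ, x ∈ w ↔ 1 ≤ x ∧ x ≤ (n : ℤ))
    (hlast : w.getD (n - 1) 0 = (n : ℤ))
    (L R : List ℤ) (hsplit : w = L ++ 1 :: R) :
    AndreWord w ↔ (AndreWord L ∧ AndreWord R) := by
  set m := L.length with hm
  have hlenw : w.length = m + 1 + R.length := by
    rw [hsplit]; simp [List.length_append]; omega
  have hn' : n = m + 1 + R.length := by rw [← hlen, hlenw]
  have hwm : w.getD m 0 = 1 := by
    rw [hsplit, List.getD_append_right _ _ _ _ (le_refl m), Nat.sub_self, List.getD_cons_zero]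
  have hwL : ∀ l, l < m → w.getD l 0 = L.getD l 0 := fun l hl => by
    rw [hsplit, List.getD_append _ _ _ _ hl]
  have hwR : ∀ j, w.getD (m + 1 + j) 0 = R.getD j 0 := fun j => by
    rw [hsplit, List.getD_append_right _ _ _ _ (by omega : L.length ≤ m + 1 + j)]
    have h : m + 1 + j - L.length = j + 1 := by omega
    rw [h, List.getD_cons_succ]
  have hmem : ∀ i, i < n → w.getD i 0 ∈ w := fun i hi => by
    rw [List.getD_eq_getElem _ _ (by omega)]
    exact List.getElem_mem _
  have hbound : ∀ i, i < n → 1 ≤ w.getD i 0 ∧ w.getD i 0 ≤ (n : ℤ) :=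
    fun i hi => (hletters _).1 (hmem i hi)
  have hmlt : m < n := by omega
  have hinj : ∀ i j, i < n → j < n → w.getD i 0 = w.getD j 0 → i = j := by
    intro i j hi hj h
    simp only [List.getD_eq_getElem _ 0 (show i < w.length by omega),
      List.getD_eq_getElem _ 0 (show j < w.length by omega)] at h
    exact (hnodup.getElem_inj_iff).1 h
  have hgt1 : ∀ i, i < n → i ≠ m → 1 < w.getD i 0 := by
    intro i hi hne
    rcases lt_or_eq_of_le (hbound i hi).1 with h | h
    · exact h
    · exact absurd (hinj i m hi hmlt (by rw [← h, hwm])) hne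
  constructor
  · intro H
    constructor
    · -- AndreWord L
      intro i hi k hk hwin
      have hiw : i < n := by omega
      obtain ⟨k', hik', hk'w, hwin', hle⟩ := H i (by omega) k hk (by
        intro l hkl hli
        rw [hwL l (by omega), hwL i hi]
        exact hwin l hkl hli)
      have hk'm : k' < m := by
        by_contra hge
        push_neg at hge
        exact hwin' m (by omega) hge (by rw [hwm]; exact hgt1 i hiw (by omega))
      refine ⟨k', hik', hk'm, ?_, ?_⟩
      · intro l hil hlk'
        rw [← hwL l (by omega), ← hwL i hi]
        exact hwin' l hil hlk'
      · rw [← hwL k (by omega), ← hwL k' hk'm]; exact hle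
    · -- AndreWord R
      intro j hj k hk hwin
      obtain ⟨k', hik', hk'w, hwin', hle⟩ := H (m + 1 + j) (by omega) (m + 1 + k) (by omega) (by
        intro l hkl hli
        have hl : l = m + 1 + (l - (m + 1)) := by omega
        rw [hl, hwR, hwR]
        exact hwin _ (by omega) (by omega))
      have hk'e : k' = m + 1 + (k' - (m + 1)) := by omega
      refine ⟨k' - (m + 1), by omega, by omega, ?_, ?_⟩
      · intro l hjl hlk'
        rw [← hwR l, ← hwR j]
        exact hwin' (m + 1 + l) (by omega) (by omega)
      · rw [← hwR k, ← hwR (k' - (m + 1))]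
        rw [hk'e] at hle
        exact hle
  · rintro ⟨hLA, hRA⟩
    intro i hiw k hk hwin
    rw [hlen] at hiw
    rcases lt_trichotomy i m with him | him | him
    · -- i in L
      obtain ⟨k', hik', hk'L, hwin', hle⟩ := hLA i him k hk (by
        intro l hkl hli
        rw [← hwL l (by omega), ← hwL i him]
        exact hwin l hkl hli)
      refine ⟨k', hik', by omega, ?_, ?_⟩
      · intro l hil hlk'
        rw [hwL l (by omega), hwL i him]
        exact hwin' l hil hlk'
      · rw [hwL k (by omega), hwL k' hk'L]; exact hle
    · -- i = m
      subst him
      have hm1 : 1 ≤ m := by omega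
      have hmn1 : m ≠ n - 1 := by
        intro h
        have h1 : (1 : ℤ) = (n : ℤ) := by rw [← hwm, h, hlast]
        omega
      refine ⟨n - 1, by omega, by omega, ?_, ?_⟩
      · intro l hml hln
        rw [hwm]
        have := (hbound l (by omega)).1
        omega
      · rw [hlast]
        exact (hbound k (by omega)).2
    · -- i in R
      have higt : 1 < w.getD i 0 := hgt1 i hiw (by omega)
      have hkm : m < k := by
        by_contra hle
        push_neg at hle
        exact hwin m hle him (by rw [hwm]; exact higt)
      have hie : i = m + 1 + (i - (m + 1)) := by omega
      obtain ⟨j', hij', hj'R, hwin', hle⟩ := hRA (i - (m + 1)) (by omega) (k - (m + 1)) (by omega) (by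
        intro l hkl hli
        rw [← hwR l, ← hwR (i - (m + 1)), ← hie]
        exact hwin (m + 1 + l) (by omega) (by omega))
      refine ⟨m + 1 + j', by omega, by omega, ?_, ?_⟩
      · intro l hil hlj'
        have hl : l = m + 1 + (l - (m + 1)) := by omega
        rw [hl, hwR, hie, hwR]
        exact hwin' (l - (m + 1)) (by omega) (by omega)
      · have hke : k = m + 1 + (k - (m + 1)) := by omega
        rw [hwR j', hke, hwR] at *
        exact hle
end

section
/- The number of inversions of any permutation π equals the number of occurrences of the mesh pattern (21, {(2,2)}) plus the number of occurrences of the mesh pattern (213, {(3,2),(3,3)}) in π. Equivalently, the set of inversions of π is partitioned into those that play the role of '21' in some occurrence of the classical pattern 213 and those that do not. -/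
open Finset

/-- The number of inversions of `π` (pairs of positions `i < j` with `π(i) > π(j)`)
equals the number of occurrences of the mesh pattern `(21, {(2,2)})` — inversions
`(i,j)` such that no entry lies strictly to the right of position `j` and strictly
above `π(i)` — plus the number of occurrences of the mesh pattern
`(213, {(3,2),(3,3)})` — occurrences `i < j < k` of `213` (`π(j) < π(i) < π(k)`)
such that no entry to the right of position `k` has value exceeding `π(i)`. -/
theorem inv_mesh_decomposition (n : ℕ) (π : Equiv.Perm (Fin n)) :
    (univ.filter fun p : Fin n × Fin n => p.1 < p.2 ∧ π p.2 < π p.1).card =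
      (univ.filter fun p : Fin n × Fin n =>
        p.1 < p.2 ∧ π p.2 < π p.1 ∧
        ¬ ∃ a : Fin n, p.2 < a ∧ π p.1 < π a).card +
      (univ.filter fun t : Fin n × Fin n × Fin n =>
        t.1 < t.2.1 ∧ t.2.1 < t.2.2 ∧ π t.2.1 < π t.1 ∧ π t.1 < π t.2.2 ∧
        ¬ ∃ a : Fin n, t.2.2 < a ∧ π t.1 < π a).card := by
  classical
  have hsplit :
      (univ.filter fun p : Fin n × Fin n => p.1 < p.2 ∧ π p.2 < π p.1).card =
        (univ.filter fun p : Fin n × Fin n =>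
          p.1 < p.2 ∧ π p.2 < π p.1 ∧
          ¬ ∃ a : Fin n, p.2 < a ∧ π p.1 < π a).card +
        (univ.filter fun p : Fin n × Fin n =>
          p.1 < p.2 ∧ π p.2 < π p.1 ∧
          ∃ a : Fin n, p.2 < a ∧ π p.1 < π a).card := by
    rw [← Finset.card_filter_add_card_filter_not
      (s := univ.filter fun p : Fin n × Fin n => p.1 < p.2 ∧ π p.2 < π p.1)
      (p := fun p => ¬ ∃ a : Fin n, p.2 < a ∧ π p.1 < π a)]
    simp only [Finset.filter_filter, not_not, and_assoc]
  rw [hsplit]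
  congr 1
  -- bijection between extendable inversions and the 213 occurrences
  have hne : ∀ p : Fin n × Fin n,
      p ∈ (univ.filter fun p : Fin n × Fin n =>
        p.1 < p.2 ∧ π p.2 < π p.1 ∧ ∃ a : Fin n, p.2 < a ∧ π p.1 < π a) →
      ((univ.filter fun a : Fin n => p.2 < a ∧ π p.1 < π a)).Nonempty := by
    intro p hp
    simp only [Finset.mem_filter, Finset.mem_univ, true_and] at hp
    obtain ⟨-, -, a, ha⟩ := hp
    exact ⟨a, by simp [ha]⟩
  apply Finset.card_bij (fun p hp =>
    (p.1, p.2, ((univ.filter fun a : Fin n => p.2 < a ∧ π p.1 < π a)).max' (hne p hp)))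
  · intro p hp
    have h1 := ((univ.filter fun a : Fin n => p.2 < a ∧ π p.1 < π a)).max'_mem (hne p hp)
    simp only [Finset.mem_filter, Finset.mem_univ, true_and] at h1 hp ⊢
    obtain ⟨h1a, h1b⟩ := h1
    refine ⟨hp.1, h1a, hp.2.1, h1b, ?_⟩
    rintro ⟨a, ha1, ha2⟩
    have := Finset.le_max' (univ.filter fun b : Fin n => p.2 < b ∧ π p.1 < π b) a
      (Finset.mem_filter.mpr ⟨Finset.mem_univ a, lt_trans h1a ha1, ha2⟩)
    exact absurd ha1 (not_lt.mpr this)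
  · intro p hp q hq h
    have e1 := congrArg Prod.fst h
    have e2 := congrArg (fun x : Fin n × Fin n × Fin n => x.2.1) h
    exact Prod.ext e1 e2
  · intro t ht
    simp only [Finset.mem_filter, Finset.mem_univ, true_and] at ht
    obtain ⟨h1, h2, h3, h4, h5⟩ := ht
    have hmem : (t.1, t.2.1) ∈ (univ.filter fun p : Fin n × Fin n =>
        p.1 < p.2 ∧ π p.2 < π p.1 ∧ ∃ a : Fin n, p.2 < a ∧ π p.1 < π a) := by
      simp only [Finset.mem_filter, Finset.mem_univ, true_and]
      exact ⟨h1, h3, t.2.2, h2, h4⟩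
    refine ⟨(t.1, t.2.1), hmem, ?_⟩
    have hmax : ((univ.filter fun a : Fin n => t.2.1 < a ∧ π t.1 < π a)).max'
          (hne _ hmem) = t.2.2 := by
        apply le_antisymm
        · apply Finset.max'_le
          intro a ha
          simp only [Finset.mem_filter, Finset.mem_univ, true_and] at ha
          by_contra hlt
          exact h5 ⟨a, not_le.mp hlt, ha.2⟩
        · exact Finset.le_max' (univ.filter fun a : Fin n => t.2.1 < a ∧ π t.1 < π a) _
            (Finset.mem_filter.mpr ⟨Finset.mem_univ _, h2, h4⟩)
    simp [hmax]
end

section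
/- Let M, I ⊆ [n] with |M| = |I| and n ∈ M ∩ I, and let S_n(M, I) be the set of permutations of [n] whose right-to-left maxima occur exactly at the positions in I with set of values equal to M. For π ∈ S_n(M, I), define ci(π) : [n]∖M → ℕ by ci(π)(y) = |{x : (y, x) is an inversion of π that is part of an occurrence of 213 with y, x as the '21'}|. Then ci is injective on S_n(M, I): ci(π) = ci(σ) implies π = σ. -/
open Finset

/-- `τ ∈ S_n(M, I)`: the right-to-left maxima of `τ` occur exactly at the positions
in `I`, and the set of their values is `M`. -/
def SMI {n : ℕ} (M I : Finset (Fin n)) (τ : Equiv.Perm (Fin n)) : Prop :=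
  (∀ j : Fin n, ((∀ i : Fin n, j < i → τ i < τ j) ↔ j ∈ I)) ∧ I.image τ = M

/-- `ci(τ)(y) = |I⁺_y|`: the number of values `x` such that `(y, x)` is an inversion
of `τ` (`y` appears before `x` and `y > x`) playing the role of `21` in some
occurrence of the pattern `213` (i.e. some value `z > y` appears after `x`). -/
def ci {n : ℕ} (τ : Equiv.Perm (Fin n)) (y : Fin n) : ℕ :=
  (univ.filter fun x : Fin n =>
    τ.symm y < τ.symm x ∧ x < y ∧ ∃ z : Fin n, τ.symm x < τ.symm z ∧ y < z).card

lemma ci_aux {n : ℕ} (τ : Equiv.Perm (Fin n)) (y : Fin n) (B : Finset (Fin n)) (P : Fin n)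
    (hB : ∀ s, s ∈ B ↔ y < τ s) (hP : P ∈ B) (hPmax : ∀ s ∈ B, s ≤ P) :
    (univ.filter fun x : Fin n =>
      τ.symm y < τ.symm x ∧ x < y ∧ ∃ z : Fin n, τ.symm x < τ.symm z ∧ y < z).card
      = ((Finset.Ioo (τ.symm y) P).filter (fun s => s ∉ B)).card := by
  apply Finset.card_bij' (fun x _ => τ.symm x) (fun s _ => τ s)
  · intro x hx
    simp only [Finset.mem_filter, Finset.mem_univ, true_and] at hx
    obtain ⟨h1, h2, z, hz1, hz2⟩ := hx
    simp only [Finset.mem_filter, Finset.mem_Ioo]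
    refine ⟨⟨h1, lt_of_lt_of_le hz1 (hPmax _ ((hB _).2 (by simpa using hz2)))⟩, ?_⟩
    intro hxB
    rw [hB] at hxB
    simp only [Equiv.apply_symm_apply] at hxB
    exact absurd h2 (not_lt.2 hxB.le)
  · intro s hs
    simp only [Finset.mem_filter, Finset.mem_Ioo] at hs
    obtain ⟨⟨h1, h2⟩, h3⟩ := hs
    simp only [Finset.mem_filter, Finset.mem_univ, true_and, Equiv.symm_apply_apply]
    refine ⟨h1, ?_, τ P, by simpa using h2, (hB P).1 hP⟩
    rcases lt_trichotomy (τ s) y with h | h | h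
    · exact h
    · exact absurd ((Equiv.symm_apply_eq τ).2 h.symm) (ne_of_lt h1)
    · exact absurd ((hB s).2 h) h3
  · intro x _; simp
  · intro s _; simp

lemma ci_key {n : ℕ} (hn : 1 ≤ n) (M I : Finset (Fin n))
    (hM : (⟨n - 1, by omega⟩ : Fin n) ∈ M)
    (τ σ : Equiv.Perm (Fin n)) (hτ : SMI M I τ) (hσ : SMI M I σ)
    (y : Fin n) (hagree : ∀ z, y < z → τ.symm z = σ.symm z)
    (hlt : τ.symm y < σ.symm y) (hci : y ∉ M → ci τ y = ci σ y) : False := by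
  by_cases hyM : y ∈ M
  · -- y is a right-to-left maximum value; its position is forced
    obtain ⟨j, hjI, hjy⟩ := Finset.mem_image.1 (hτ.2 ▸ hyM)
    have hjp : j = τ.symm y := by rw [← hjy, Equiv.symm_apply_apply]
    have hmax := (hσ.1 j).2 hjI (σ.symm y) (hjp ▸ hlt)
    rw [Equiv.apply_symm_apply] at hmax
    -- y < σ j, so by hagree, τ.symm (σ j) = σ.symm (σ j) = j, so τ j = σ j = y; contra
    have := hagree (σ j) hmax
    rw [Equiv.symm_apply_apply] at this
    have : τ j = σ j := by
      have h2 : τ (τ.symm (σ j)) = τ j := by rw [this]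
      rw [Equiv.apply_symm_apply] at h2
      exact h2.symm
    rw [hjy] at this
    exact absurd hmax (by rw [← this]; exact lt_irrefl y)
  · -- y not a RL-max value
    have hci' := hci hyM
    set top : Fin n := ⟨n - 1, by omega⟩ with htop
    have hytop : y < top := by
      have h1 : y.val < n := y.isLt
      have h2 : y.val ≠ n - 1 := fun hc => hyM (by rwa [show y = top from Fin.ext hc])
      exact Fin.mk_lt_mk.2 (by omega) |>.trans_le (le_refl top) |>.trans_le (le_refl top)
    set A : Finset (Fin n) := univ.filter (fun z => y < z) with hA
    have htopA : top ∈ A := by simp [hA, hytop]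
    set B : Finset (Fin n) := A.image τ.symm with hBdef
    have hBne : B.Nonempty := ⟨τ.symm top, Finset.mem_image_of_mem _ htopA⟩
    have hBσ : B = A.image σ.symm := by
      apply Finset.image_congr
      intro z hz
      exact hagree z (by simpa [hA] using hz)
    have hBτ : ∀ s, s ∈ B ↔ y < τ s := by
      intro s
      simp only [hBdef, hA, Finset.mem_image, Finset.mem_filter, Finset.mem_univ, true_and]
      constructor
      · rintro ⟨z, hz, rfl⟩; simpa using hz
      · intro hs; exact ⟨τ s, hs, by simp⟩
    have hBσ' : ∀ s, s ∈ B ↔ y < σ s := by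
      intro s
      rw [hBσ]
      simp only [hA, Finset.mem_image, Finset.mem_filter, Finset.mem_univ, true_and]
      constructor
      · rintro ⟨z, hz, rfl⟩; simpa using hz
      · intro hs; exact ⟨σ s, hs, by simp⟩
    set P : Fin n := B.max' hBne with hPdef
    have hP : P ∈ B := Finset.max'_mem _ _
    have hPmax : ∀ s ∈ B, s ≤ P := fun s hs => Finset.le_max' _ _ hs
    set p : Fin n := τ.symm y with hp
    set q : Fin n := σ.symm y with hq
    -- p < P
    have hpI : p ∉ I := by
      intro hc
      apply hyM
      rw [← hτ.2]
      exact Finset.mem_image.2 ⟨p, hc, by simp [hp]⟩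
    have hpP : p < P := by
      have := (hτ.1 p).not.2 (by simpa using hpI)
      push_neg at this
      obtain ⟨i, hi1, hi2⟩ := this
      rw [hp, Equiv.apply_symm_apply] at hi2
      have hiy : τ i ≠ y := by
        intro hc
        have : i = p := by rw [hp, ← hc, Equiv.symm_apply_apply]
        exact absurd hi1 (this ▸ lt_irrefl p)
      have hiB : i ∈ B := (hBτ i).2 (lt_of_le_of_ne hi2 (Ne.symm hiy))
      exact lt_of_lt_of_le hi1 (hPmax i hiB)
    have hqI : q ∉ I := by
      intro hc
      apply hyM
      rw [← hσ.2]
      exact Finset.mem_image.2 ⟨q, hc, by simp [hq]⟩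
    have hqP : q < P := by
      have := (hσ.1 q).not.2 (by simpa using hqI)
      push_neg at this
      obtain ⟨i, hi1, hi2⟩ := this
      rw [hq, Equiv.apply_symm_apply] at hi2
      have hiy : σ i ≠ y := by
        intro hc
        have : i = q := by rw [hq, ← hc, Equiv.symm_apply_apply]
        exact absurd hi1 (this ▸ lt_irrefl q)
      have hiB : i ∈ B := (hBσ' i).2 (lt_of_le_of_ne hi2 (Ne.symm hiy))
      exact lt_of_lt_of_le hi1 (hPmax i hiB)
    have hqB : q ∉ B := by
      intro hc
      have := (hBσ' q).1 hc
      rw [hq, Equiv.apply_symm_apply] at this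
      exact lt_irrefl y this
    have e1 : ci τ y = ((Finset.Ioo p P).filter (fun s => s ∉ B)).card :=
      ci_aux τ y B P hBτ hP hPmax
    have e2 : ci σ y = ((Finset.Ioo q P).filter (fun s => s ∉ B)).card :=
      ci_aux σ y B P hBσ' hP hPmax
    have hss : (Finset.Ioo q P).filter (fun s => s ∉ B) ⊂
        (Finset.Ioo p P).filter (fun s => s ∉ B) := by
      constructor
      · apply Finset.filter_subset_filter
        exact Finset.Ioo_subset_Ioo (le_of_lt hlt) le_rfl
      · intro hsub
        have hqmem : q ∈ (Finset.Ioo p P).filter (fun s => s ∉ B) := by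
          simp [Finset.mem_Ioo, hlt, hqP, hqB]
        have := hsub hqmem
        simp [Finset.mem_Ioo] at this
    have := Finset.card_lt_card hss
    omega

/-- `ci` is injective on `S_n(M, I)` for any `M, I ⊆ [n]` with `|M| = |I|` and
`n ∈ M ∩ I` (here position and value `n` are the top element of `Fin n`):
if `ci(τ) = ci(σ)` on `[n] ∖ M` then `τ = σ`. -/
theorem ci_injective (n : ℕ) (hn : 1 ≤ n) (M I : Finset (Fin n))
    (hcard : M.card = I.card)
    (hM : (⟨n - 1, by omega⟩ : Fin n) ∈ M) (hI : (⟨n - 1, by omega⟩ : Fin n) ∈ I)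
    (τ σ : Equiv.Perm (Fin n)) (hτ : SMI M I τ) (hσ : SMI M I σ)
    (h : ∀ y : Fin n, y ∉ M → ci τ y = ci σ y) :
    τ = σ := by
  have hs : ∀ y, τ.symm y = σ.symm y := by
    by_contra hc
    push_neg at hc
    obtain ⟨y0, hy0⟩ := hc
    have hD : (univ.filter fun y : Fin n => τ.symm y ≠ σ.symm y).Nonempty :=
      ⟨y0, by simp [hy0]⟩
    set y := Finset.max' _ hD with hy
    have hyD := Finset.max'_mem _ hD
    have hyne : τ.symm y ≠ σ.symm y := (Finset.mem_filter.1 hyD).2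
    have hagree : ∀ z, y < z → τ.symm z = σ.symm z := by
      intro z hz
      by_contra hzz
      exact absurd (Finset.le_max' _ z (by simp [hzz])) (not_le.2 hz)
    rcases lt_or_gt_of_ne hyne with hl | hl
    · exact ci_key hn M I hM τ σ hτ hσ y hagree hl (fun hy' => h y hy')
    · exact ci_key hn M I hM σ τ hσ hτ y (fun z hz => (hagree z hz).symm) hl
        (fun hy' => (h y hy').symm)
  apply Equiv.ext
  intro i
  have hti := hs (τ i)
  rw [Equiv.symm_apply_apply] at hti
  exact ((congrArg σ hti).trans (σ.apply_symm_apply _)).symm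
end
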